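/- arXiv:1010.0234 — 8 statements merged into one kernel-verified Lean document; each statement's English description precedes it below -/
import Mathlib

section
/- Let G be an ordered abelian group. The ideals of G satisfy the ascending chain condition if and only if every ideal of G has an order unit. -/
/-- An ideal of an ordered abelian group: an order-convex directed subgroup. -/
def IsOrderIdeal {G : Type*} [AddCommGroup G] [PartialOrder G] (H : AddSubgroup G) : Prop :=
  (∀ g h x : G, g ∈ H → h ∈ H → g ≤ x → x ≤ h → x ∈ H) ∧
  (∀ x ∈ H, ∃ a ∈ H, ∃ b ∈ H, 0 ≤ a ∧ 0 ≤ b ∧ x = a - b)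

/-- An order unit of an ideal `H`: a positive element `u ∈ H` such that every
`g ∈ H` satisfies `-n • u ≤ g ≤ n • u` for some natural number `n`. -/
def IsOrderUnitOf {G : Type*} [AddCommGroup G] [PartialOrder G] (H : AddSubgroup G)
    (u : G) : Prop :=
  u ∈ H ∧ 0 ≤ u ∧ ∀ g ∈ H, ∃ n : ℕ, -(n • u) ≤ g ∧ g ≤ n • u

section Aux
variable {G : Type*} [AddCommGroup G] [PartialOrder G]
  (hadd : ∀ g h x : G, g ≤ h → g + x ≤ h + x)

include hadd

theorem aux_add_le_add {a b c d : G} (h1 : a ≤ b) (h2 : c ≤ d) : a + c ≤ b + d :=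
  calc a + c ≤ b + c := hadd a b c h1
    _ = c + b := add_comm _ _
    _ ≤ d + b := hadd c d b h2
    _ = b + d := add_comm _ _

theorem aux_neg_le_neg {a b : G} (h : a ≤ b) : -b ≤ -a := by
  have h1 := hadd a b (-a + -b) h
  rwa [show a + (-a + -b) = -b by abel, show b + (-a + -b) = -a by abel] at h1

theorem aux_nsmul_nonneg {u : G} (hu : 0 ≤ u) (n : ℕ) : 0 ≤ n • u := by
  induction n with
  | zero => simp
  | succ k ih =>
    have := aux_add_le_add hadd ih hu
    simpa [succ_nsmul] using this

theorem aux_nsmul_le_nsmul_right {u v : G} (h : u ≤ v) (n : ℕ) : n • u ≤ n • v := by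
  induction n with
  | zero => simp
  | succ k ih =>
    have := aux_add_le_add hadd ih h
    simpa [succ_nsmul] using this

theorem aux_nsmul_le_nsmul_left {u : G} (hu : 0 ≤ u) {n m : ℕ} (h : n ≤ m) :
    n • u ≤ m • u := by
  obtain ⟨k, rfl⟩ := Nat.exists_eq_add_of_le h
  have h0 : (0:G) ≤ k • u := aux_nsmul_nonneg hadd hu k
  calc n • u = 0 + n • u := by abel
    _ ≤ k • u + n • u := hadd 0 (k • u) (n • u) h0
    _ = (n + k) • u := by rw [add_nsmul]; abel

/-- The ideal generated by `u`. -/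
def genIdeal (u : G) : AddSubgroup G where
  carrier := {g | ∃ n : ℕ, -(n • u) ≤ g ∧ g ≤ n • u}
  zero_mem' := ⟨0, by simp⟩
  add_mem' := by
    rintro a b ⟨n, hn1, hn2⟩ ⟨m, hm1, hm2⟩
    refine ⟨n + m, ?_, ?_⟩
    · calc -((n + m) • u) = -(n • u) + -(m • u) := by rw [add_nsmul]; abel
        _ ≤ a + b := aux_add_le_add hadd hn1 hm1
    · calc a + b ≤ n • u + m • u := aux_add_le_add hadd hn2 hm2
        _ = (n + m) • u := (add_nsmul u n m).symm
  neg_mem' := by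
    rintro a ⟨n, hn1, hn2⟩
    exact ⟨n, by simpa using aux_neg_le_neg hadd hn2,
      by simpa using aux_neg_le_neg hadd hn1⟩

theorem genIdeal_mono {u v : G} (h : u ≤ v) : genIdeal hadd u ≤ genIdeal hadd v := by
  rintro g ⟨n, hn1, hn2⟩
  refine ⟨n, ?_, le_trans hn2 (aux_nsmul_le_nsmul_right hadd h n)⟩
  exact le_trans (aux_neg_le_neg hadd (aux_nsmul_le_nsmul_right hadd h n)) hn1

theorem genIdeal_isIdeal {u : G} (hu : 0 ≤ u) : IsOrderIdeal (genIdeal hadd u) := by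
  constructor
  · rintro g h x ⟨n, hn1, _⟩ ⟨m, _, hm2⟩ hgx hxh
    refine ⟨n + m, ?_, ?_⟩
    · refine le_trans ?_ (le_trans hn1 hgx)
      exact aux_neg_le_neg hadd (aux_nsmul_le_nsmul_left hadd hu (Nat.le_add_right n m))
    · exact le_trans (le_trans hxh hm2)
        (aux_nsmul_le_nsmul_left hadd hu (Nat.le_add_left m n))
  · rintro x ⟨n, hn1, hn2⟩
    have h0n : (0:G) ≤ n • u := aux_nsmul_nonneg hadd hu n
    refine ⟨n • u, ⟨n, le_trans (by simpa using aux_neg_le_neg hadd h0n) h0n, le_refl _⟩,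
      n • u - x, ⟨n + n, ?_, ?_⟩, h0n, ?_, by abel⟩
    · have : (0:G) ≤ n • u - x := by
        have := hadd x (n • u) (-x) hn2
        simpa [sub_eq_add_neg] using this
      refine le_trans ?_ this
      have := aux_nsmul_nonneg hadd hu (n + n)
      simpa using aux_neg_le_neg hadd this
    · have hx : -x ≤ n • u := by simpa using aux_neg_le_neg hadd hn1
      calc n • u - x = n • u + -x := sub_eq_add_neg _ _
        _ ≤ n • u + n • u := aux_add_le_add hadd (le_refl _) hx
        _ = (n + n) • u := (add_nsmul u n n).symm
    · have := hadd x (n • u) (-x) hn2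
      simpa [sub_eq_add_neg] using this


theorem mem_genIdeal {u g : G} :
    g ∈ genIdeal hadd u ↔ ∃ n : ℕ, -(n • u) ≤ g ∧ g ≤ n • u := Iff.rfl

theorem genIdeal_le_of_mem {H : AddSubgroup G} (hH : IsOrderIdeal H) {u : G} (hu : u ∈ H) :
    genIdeal hadd u ≤ H := by
  rintro g ⟨n, hn1, hn2⟩
  exact hH.1 (-(n • u)) (n • u) g (neg_mem (AddSubgroup.nsmul_mem H hu n))
    (AddSubgroup.nsmul_mem H hu n) hn1 hn2

end Aux

/-- The ideals of an ordered abelian group satisfy the ascending chain condition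
if and only if every ideal has an order unit. -/
theorem stmt3 {G : Type*} [AddCommGroup G] [PartialOrder G]
    (hadd : ∀ g h x : G, g ≤ h → g + x ≤ h + x)
    (hdir : ∀ g h : G, ∃ y : G, g ≤ y ∧ h ≤ y) :
    (∀ f : ℕ → AddSubgroup G, (∀ i, IsOrderIdeal (f i)) → (∀ i, f i ≤ f (i + 1)) →
      ∃ N, ∀ m, N ≤ m → f m = f N) ↔
    (∀ H : AddSubgroup G, IsOrderIdeal H → ∃ u : G, IsOrderUnitOf H u) := by
  constructor
  · -- ACC → every ideal has an order unit
    intro hacc H hH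
    by_contra hno
    push_neg at hno
    have key : ∀ u : G, u ∈ H → 0 ≤ u → ∃ v, v ∈ H ∧ 0 ≤ v ∧ u ≤ v ∧
        ∃ g, g ∉ genIdeal hadd u ∧ g ∈ genIdeal hadd v := by
      intro u huH hu0
      have h1 : ¬ IsOrderUnitOf H u := hno u
      rw [IsOrderUnitOf] at h1
      push_neg at h1
      obtain ⟨g, hgH, hg⟩ := h1 huH hu0
      obtain ⟨a, haH, b, hbH, ha0, hb0, rfl⟩ := hH.2 g hgH
      have hua : u ≤ u + a := by
        have := hadd 0 a u ha0
        calc u = 0 + u := by abel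
          _ ≤ a + u := this
          _ = u + a := add_comm _ _
      have huab : u + a ≤ u + a + b := by
        have := hadd 0 b (u + a) hb0
        calc u + a = 0 + (u + a) := by abel
          _ ≤ b + (u + a) := this
          _ = u + a + b := by abel
      have hv0 : (0:G) ≤ u + a + b := le_trans hu0 (le_trans hua huab)
      refine ⟨u + a + b, add_mem (add_mem huH haH) hbH, hv0,
        le_trans hua huab, a - b, ?_, ⟨1, ?_, ?_⟩⟩
      · rw [mem_genIdeal]
        rintro ⟨n, hn1, hn2⟩
        exact (hg n hn1) hn2
      · have h1 : -b ≤ a - b := by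
          have := hadd 0 a (-b) ha0
          calc -b = 0 + -b := by abel
            _ ≤ a + -b := this
            _ = a - b := (sub_eq_add_neg a b).symm
        have h2 : b ≤ u + a + b := by
          have := hadd 0 (u + a) b (le_trans hu0 hua)
          calc b = 0 + b := by abel
            _ ≤ (u + a) + b := this
        have := aux_neg_le_neg hadd h2
        rw [one_nsmul]
        exact le_trans this h1
      · have h1 : a - b ≤ a := by
          have hb : -b ≤ 0 := by simpa using aux_neg_le_neg hadd hb0
          have := hadd (-b) 0 a hb
          calc a - b = -b + a := by abel
            _ ≤ 0 + a := this
            _ = a := by abel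
        have h2 : a ≤ u + a + b := by
          have h3 : a ≤ u + a := by
            have := hadd 0 u a hu0
            calc a = 0 + a := by abel
              _ ≤ u + a := this
          exact le_trans h3 huab
        rw [one_nsmul]
        exact le_trans h1 h2
    choose v hvH hv0 huv g hgnot hgmem using key
    let s : ℕ → {x : G // x ∈ H ∧ 0 ≤ x} := fun n => Nat.rec ⟨0, H.zero_mem, le_refl 0⟩
      (fun _ p => ⟨v p.1 p.2.1 p.2.2, hvH p.1 p.2.1 p.2.2, hv0 p.1 p.2.1 p.2.2⟩) n
    have hs : ∀ k, (s (k+1)).1 = v (s k).1 (s k).2.1 (s k).2.2 := fun _ => rfl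
    set F : ℕ → AddSubgroup G := fun k => genIdeal hadd (s k).1 with hF
    obtain ⟨N, hN⟩ := hacc F (fun k => genIdeal_isIdeal hadd (s k).2.2)
      (fun k => genIdeal_mono hadd (huv (s k).1 (s k).2.1 (s k).2.2))
    have heq := hN (N + 1) (Nat.le_succ N)
    have hmem : g (s N).1 (s N).2.1 (s N).2.2 ∈ F (N + 1) :=
      hgmem (s N).1 (s N).2.1 (s N).2.2
    rw [heq] at hmem
    exact hgnot (s N).1 (s N).2.1 (s N).2.2 hmem
  · -- every ideal has an order unit → ACC
    intro hunit f hfid hfch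
    have hmono : Monotone f := monotone_nat_of_le_succ hfch
    let H : AddSubgroup G :=
      { carrier := {x | ∃ i, x ∈ f i}
        zero_mem' := ⟨0, (f 0).zero_mem⟩
        add_mem' := by
          rintro a b ⟨i, hi⟩ ⟨j, hj⟩
          exact ⟨max i j, add_mem (hmono (le_max_left i j) hi) (hmono (le_max_right i j) hj)⟩
        neg_mem' := by rintro a ⟨i, hi⟩; exact ⟨i, neg_mem hi⟩ }
    have hHmem : ∀ x : G, x ∈ H ↔ ∃ i, x ∈ f i := fun x => Iff.rfl
    have hHid : IsOrderIdeal H := by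
      constructor
      · rintro a b x ⟨i, hi⟩ ⟨j, hj⟩ hax hxb
        exact ⟨max i j, (hfid (max i j)).1 a b x (hmono (le_max_left i j) hi)
          (hmono (le_max_right i j) hj) hax hxb⟩
      · rintro x ⟨i, hi⟩
        obtain ⟨a, haf, b, hbf, ha0, hb0, hx⟩ := (hfid i).2 x hi
        exact ⟨a, ⟨i, haf⟩, b, ⟨i, hbf⟩, ha0, hb0, hx⟩
    obtain ⟨u, huH, hu0, hub⟩ := hunit H hHid
    obtain ⟨N, huN⟩ := (hHmem u).mp huH
    refine ⟨N, fun m hm => le_antisymm ?_ (hmono hm)⟩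
    intro x hx
    obtain ⟨n, h1, h2⟩ := hub x ⟨m, hx⟩
    exact (hfid N).1 (-(n • u)) (n • u) x (neg_mem (AddSubgroup.nsmul_mem (f N) huN n))
      (AddSubgroup.nsmul_mem (f N) huN n) h1 h2
end

section
/- If G is an unperforated ordered abelian group with Riesz interpolation, then the ordered rational vector space G ⊗_ℤ ℚ (with the cone generated by the image of G⁺) also has Riesz interpolation. -/
/-!
Clearing denominators, finitely many elements of the cone become `N⁻¹ • (1 ⊗ gᵢ)` with
`gᵢ ≥ 0` in `G`, for one common `N`. An unperforated group is torsion-free, hence flat over `ℤ`,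
so `g ↦ 1 ⊗ g` is injective; therefore the identity `(b₁ - a₁) - (b₁ - a₂) = (b₂ - a₁) - (b₂ - a₂)`
between the four given cone elements already holds between their numerators in `G`. Riesz
interpolation in `G` then produces the numerator of the interpolant.
-/

open TensorProduct

/-- The cone of `ℚ ⊗[ℤ] G` generated by the image of the positive cone of `G`:
all nonnegative rational multiples of images of positive elements. -/
def qTensorCone (G : Type*) [AddCommGroup G] [PartialOrder G] :
    Set (ℚ ⊗[ℤ] G) :=
  {x | ∃ (q : ℚ) (g : G), 0 ≤ q ∧ 0 ≤ g ∧ x = q • ((1 : ℚ) ⊗ₜ[ℤ] g)}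

def Unperforated (G : Type*) [AddCommGroup G] [Preorder G] : Prop :=
  ∀ (n : ℕ) (g : G), 0 < n → 0 ≤ n • g → 0 ≤ g

def RieszInterpolation (G : Type*) [Preorder G] : Prop :=
  ∀ a₁ a₂ b₁ b₂ : G, a₁ ≤ b₁ → a₁ ≤ b₂ → a₂ ≤ b₁ → a₂ ≤ b₂ →
    ∃ z : G, a₁ ≤ z ∧ a₂ ≤ z ∧ z ≤ b₁ ∧ z ≤ b₂

theorem Unperforated.isAddTorsionFree {G : Type*} [AddCommGroup G] [PartialOrder G]
    [IsOrderedAddMonoid G] (h : Unperforated G) : IsAddTorsionFree G := by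
  refine ⟨fun n hn a b hab => ?_⟩
  have hn : 0 < n := Nat.pos_of_ne_zero hn
  have hzero : n • (a - b) = 0 := by simpa [nsmul_sub, sub_eq_zero] using hab
  have hle : 0 ≤ a - b := h n _ hn hzero.ge
  have hge : 0 ≤ -(a - b) := h n _ hn (by rw [smul_neg, hzero, neg_zero])
  exact sub_eq_zero.mp (le_antisymm (neg_nonneg.mp hge) hle)

section qTensorCone

variable {G : Type*} [AddCommGroup G] [PartialOrder G]

theorem mem_qTensorCone_of_nsmul_eq_tmul {x : ℚ ⊗[ℤ] G} {n : ℕ} (hn : n ≠ 0) {g : G}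
    (hg : 0 ≤ g) (h : n • x = (1 : ℚ) ⊗ₜ[ℤ] g) : x ∈ qTensorCone G :=
  ⟨(n : ℚ)⁻¹, g, by positivity, hg, by
    rw [← h, ← Nat.cast_smul_eq_nsmul ℚ, inv_smul_smul₀ (Nat.cast_ne_zero.mpr hn)]⟩

variable [IsOrderedAddMonoid G]

theorem exists_nsmul_eq_tmul_of_mem_qTensorCone {x : ℚ ⊗[ℤ] G} (hx : x ∈ qTensorCone G) :
    ∃ n : ℕ, n ≠ 0 ∧ ∀ m : ℕ, n ∣ m → ∃ g : G, 0 ≤ g ∧ m • x = (1 : ℚ) ⊗ₜ[ℤ] g := by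
  obtain ⟨q, g, hq, hg, rfl⟩ := hx
  refine ⟨q.den, q.den_ne_zero, ?_⟩
  rintro _ ⟨k, rfl⟩
  refine ⟨(k * q.num.toNat) • g, nsmul_nonneg hg _, ?_⟩
  rw [tmul_smul, ← Nat.cast_smul_eq_nsmul ℚ, ← Nat.cast_smul_eq_nsmul ℚ, smul_smul]
  have hnum : (q.num.toNat : ℚ) = q.num := by
    exact_mod_cast Int.toNat_of_nonneg (Rat.num_nonneg.mpr hq)
  push_cast
  rw [hnum, ← Rat.den_mul_eq_num]
  ring_nf

variable [IsAddTorsionFree G]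

theorem qTensorCone_interpolation_of_nsmul_eq_tmul (hG : RieszInterpolation G)
    {a₁ a₂ b₁ b₂ : ℚ ⊗[ℤ] G} {N : ℕ} (hN : N ≠ 0) {g₁₁ g₁₂ g₂₁ g₂₂ : G}
    (hg₁₁ : 0 ≤ g₁₁) (hg₁₂ : 0 ≤ g₁₂) (hg₂₁ : 0 ≤ g₂₁) (hg₂₂ : 0 ≤ g₂₂)
    (h₁₁ : N • (b₁ - a₁) = (1 : ℚ) ⊗ₜ[ℤ] g₁₁) (h₁₂ : N • (b₂ - a₁) = (1 : ℚ) ⊗ₜ[ℤ] g₁₂)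
    (h₂₁ : N • (b₁ - a₂) = (1 : ℚ) ⊗ₜ[ℤ] g₂₁) (h₂₂ : N • (b₂ - a₂) = (1 : ℚ) ⊗ₜ[ℤ] g₂₂) :
    ∃ z : ℚ ⊗[ℤ] G,
      z - a₁ ∈ qTensorCone G ∧ z - a₂ ∈ qTensorCone G ∧
      b₁ - z ∈ qTensorCone G ∧ b₂ - z ∈ qTensorCone G := by
  have hd : g₁₁ - g₂₁ = g₁₂ - g₂₂ := by
    apply Module.Flat.tensorProduct_mk_injective ℤ G ℚ
    simp only [mk_apply, tmul_sub, ← h₁₁, ← h₁₂, ← h₂₁, ← h₂₂, ← smul_sub]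
    abel_nf
  obtain ⟨w, hw, hwd, hw₁, hw₂⟩ := hG 0 (g₁₁ - g₂₁) g₁₁ g₁₂ hg₁₁ hg₁₂
    (sub_le_self _ hg₂₁) (hd ▸ sub_le_self _ hg₂₂)
  set z := a₁ + (N : ℚ)⁻¹ • (1 : ℚ) ⊗ₜ[ℤ] w
  have hz : N • (z - a₁) = (1 : ℚ) ⊗ₜ[ℤ] w := by
    rw [add_sub_cancel_left, ← Nat.cast_smul_eq_nsmul ℚ,
      smul_inv_smul₀ (Nat.cast_ne_zero.mpr hN)]
  refine ⟨z, mem_qTensorCone_of_nsmul_eq_tmul hN hw hz,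
    mem_qTensorCone_of_nsmul_eq_tmul hN (sub_nonneg.mpr hwd) ?_,
    mem_qTensorCone_of_nsmul_eq_tmul hN (sub_nonneg.mpr hw₁) ?_,
    mem_qTensorCone_of_nsmul_eq_tmul hN (sub_nonneg.mpr hw₂) ?_⟩
  · rw [tmul_sub, tmul_sub, ← hz, ← h₁₁, ← h₂₁]; simp only [smul_sub]; abel
  · rw [tmul_sub, ← hz, ← h₁₁]; simp only [smul_sub]; abel
  · rw [tmul_sub, ← hz, ← h₁₂]; simp only [smul_sub]; abel

theorem qTensorCone_interpolation (hG : RieszInterpolation G) :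
    ∀ a₁ a₂ b₁ b₂ : ℚ ⊗[ℤ] G,
      b₁ - a₁ ∈ qTensorCone G → b₂ - a₁ ∈ qTensorCone G →
      b₁ - a₂ ∈ qTensorCone G → b₂ - a₂ ∈ qTensorCone G →
      ∃ z : ℚ ⊗[ℤ] G,
        z - a₁ ∈ qTensorCone G ∧ z - a₂ ∈ qTensorCone G ∧
        b₁ - z ∈ qTensorCone G ∧ b₂ - z ∈ qTensorCone G := by
  intro a₁ a₂ b₁ b₂ h₁₁ h₁₂ h₂₁ h₂₂
  obtain ⟨n₁₁, hn₁₁, H₁₁⟩ := exists_nsmul_eq_tmul_of_mem_qTensorCone h₁₁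
  obtain ⟨n₁₂, hn₁₂, H₁₂⟩ := exists_nsmul_eq_tmul_of_mem_qTensorCone h₁₂
  obtain ⟨n₂₁, hn₂₁, H₂₁⟩ := exists_nsmul_eq_tmul_of_mem_qTensorCone h₂₁
  obtain ⟨n₂₂, hn₂₂, H₂₂⟩ := exists_nsmul_eq_tmul_of_mem_qTensorCone h₂₂
  set N := n₁₁ * n₁₂ * n₂₁ * n₂₂
  obtain ⟨g₁₁, hg₁₁, e₁₁⟩ := H₁₁ N (Dvd.intro (n₁₂ * n₂₁ * n₂₂) (by ring))
  obtain ⟨g₁₂, hg₁₂, e₁₂⟩ := H₁₂ N (Dvd.intro (n₁₁ * n₂₁ * n₂₂) (by ring))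
  obtain ⟨g₂₁, hg₂₁, e₂₁⟩ := H₂₁ N (Dvd.intro (n₁₁ * n₁₂ * n₂₂) (by ring))
  obtain ⟨g₂₂, hg₂₂, e₂₂⟩ := H₂₂ N (Dvd.intro (n₁₁ * n₁₂ * n₂₁) (by ring))
  have hN : N ≠ 0 := by positivity
  exact qTensorCone_interpolation_of_nsmul_eq_tmul hG hN hg₁₁ hg₁₂ hg₂₁ hg₂₂ e₁₁ e₁₂ e₂₁ e₂₂

end qTensorCone

theorem stmt4_general {G : Type*} [AddCommGroup G] [PartialOrder G]
    (hadd : ∀ g h x : G, g ≤ h → g + x ≤ h + x)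
    (hunperf : ∀ (n : ℕ) (g : G), 0 < n → 0 ≤ n • g → 0 ≤ g)
    (hRiesz : ∀ a₁ a₂ b₁ b₂ : G, a₁ ≤ b₁ → a₁ ≤ b₂ → a₂ ≤ b₁ → a₂ ≤ b₂ →
      ∃ z : G, a₁ ≤ z ∧ a₂ ≤ z ∧ z ≤ b₁ ∧ z ≤ b₂) :
    ∀ a₁ a₂ b₁ b₂ : ℚ ⊗[ℤ] G,
      b₁ - a₁ ∈ qTensorCone G → b₂ - a₁ ∈ qTensorCone G →
      b₁ - a₂ ∈ qTensorCone G → b₂ - a₂ ∈ qTensorCone G →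
      ∃ z : ℚ ⊗[ℤ] G,
        z - a₁ ∈ qTensorCone G ∧ z - a₂ ∈ qTensorCone G ∧
        b₁ - z ∈ qTensorCone G ∧ b₂ - z ∈ qTensorCone G := by
  have : IsOrderedAddMonoid G := { add_le_add_left := fun a b hab c => hadd a b c hab }
  have : IsAddTorsionFree G := Unperforated.isAddTorsionFree hunperf
  exact qTensorCone_interpolation hRiesz

/-- If `G` is an unperforated ordered abelian group with Riesz interpolation, then
the ordered rational vector space `G ⊗_ℤ ℚ`, with the cone generated by the image
of `G⁺`, also has Riesz interpolation. -/
theorem stmt4 {G : Type*} [AddCommGroup G] [PartialOrder G]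
    (hadd : ∀ g h x : G, g ≤ h → g + x ≤ h + x)
    (hdir : ∀ g h : G, ∃ y : G, g ≤ y ∧ h ≤ y)
    (hunperf : ∀ (n : ℕ) (g : G), 0 < n → 0 ≤ n • g → 0 ≤ g)
    (hRiesz : ∀ a₁ a₂ b₁ b₂ : G, a₁ ≤ b₁ → a₁ ≤ b₂ → a₂ ≤ b₁ → a₂ ≤ b₂ →
      ∃ z : G, a₁ ≤ z ∧ a₂ ≤ z ∧ z ≤ b₁ ∧ z ≤ b₂) :
    ∀ a₁ a₂ b₁ b₂ : ℚ ⊗[ℤ] G,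
      b₁ - a₁ ∈ qTensorCone G → b₂ - a₁ ∈ qTensorCone G →
      b₁ - a₂ ∈ qTensorCone G → b₂ - a₂ ∈ qTensorCone G →
      ∃ z : ℚ ⊗[ℤ] G,
        z - a₁ ∈ qTensorCone G ∧ z - a₂ ∈ qTensorCone G ∧
        b₁ - z ∈ qTensorCone G ∧ b₂ - z ∈ qTensorCone G :=
  stmt4_general hadd hunperf hRiesz
end

section
/- Let G be an unperforated ordered abelian group with order unit u. Then u ⊗ 1 is an order unit of G ⊗_ℤ ℚ, and restriction gives a bijection between the states on (G ⊗_ℤ ℚ, u ⊗ 1) and the states on (G, u). -/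
open TensorProduct

/-- States on `(G, u)`: additive, positive, normalized at `u`. -/
def IsStateOn {G : Type*} [AddCommGroup G] [PartialOrder G] (u : G) (f : G → ℝ) : Prop :=
  (∀ a b : G, f (a + b) = f a + f b) ∧ (∀ a : G, 0 ≤ a → 0 ≤ f a) ∧ f u = 1

/-- States on `(G ⊗_ℤ ℚ, u ⊗ 1)`. -/
def IsTensorStateOn {G : Type*} [AddCommGroup G] [PartialOrder G] (u : G)
    (φ : ℚ ⊗[ℤ] G → ℝ) : Prop :=
  (∀ x y : ℚ ⊗[ℤ] G, φ (x + y) = φ x + φ y) ∧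
  (∀ x ∈ qTensorCone G, 0 ≤ φ x) ∧ φ ((1 : ℚ) ⊗ₜ[ℤ] u) = 1

/-!
Every element of `ℚ ⊗[ℤ] G` is `g / n := n⁻¹ • (1 ⊗ g)` for some `g : G` and `n > 0`, since
`ℚ ⊗[ℤ] G` is the localization of `G` at the nonzero integers. Hence bounds `-(m • u) ≤ g ≤ m • u`
pass to `g / n`, and an additive map to `ℝ` is determined by its values on the `1 ⊗ g`, as `ℝ` is
torsion free. Conversely a state `ψ` on `G` extends by `q ⊗ g ↦ q * ψ g`, which is positive on the
cone.
-/

section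

variable {G : Type*} [AddCommGroup G]

theorem exists_eq_inv_natCast_smul_one_tmul (x : ℚ ⊗[ℤ] G) :
    ∃ (n : ℕ) (g : G), 0 < n ∧ x = (n : ℚ)⁻¹ • ((1 : ℚ) ⊗ₜ[ℤ] g) := by
  obtain ⟨⟨g, s, hs⟩, hx⟩ :=
    IsLocalizedModule.surj (nonZeroDivisors ℤ) (TensorProduct.mk ℤ ℚ G 1) x
  have hs0 : s ≠ 0 := nonZeroDivisors.ne_zero hs
  -- multiplying by `s` once more makes the denominator `s ^ 2` positive
  refine ⟨s.natAbs ^ 2, s • g, by positivity, ?_⟩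
  have hx : (s : ℚ) • x = (1 : ℚ) ⊗ₜ[ℤ] g := by
    simpa only [Submonoid.smul_def, Int.cast_smul_eq_zsmul, mk_apply] using hx
  have hsq : ((s.natAbs ^ 2 : ℕ) : ℚ) = (s : ℚ) * s := by
    push_cast; rw [Nat.cast_natAbs, Int.cast_abs, sq_abs, sq]
  have hs0' : (s : ℚ) ≠ 0 := Int.cast_ne_zero.mpr hs0
  rw [tmul_smul, ← Int.cast_smul_eq_zsmul ℚ, ← hx, smul_smul, smul_smul, hsq,
    show ((s : ℚ) * s)⁻¹ * s * s = 1 by field_simp, one_smul]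

theorem AddMonoidHom.ext_ratTensor {M : Type*} [AddCommGroup M] [IsAddTorsionFree M]
    {φ ψ : ℚ ⊗[ℤ] G →+ M} (h : ∀ g : G, φ ((1 : ℚ) ⊗ₜ[ℤ] g) = ψ ((1 : ℚ) ⊗ₜ[ℤ] g)) : φ = ψ := by
  ext x
  obtain ⟨n, g, hn, rfl⟩ := exists_eq_inv_natCast_smul_one_tmul x
  have hg : n • ((n : ℚ)⁻¹ • ((1 : ℚ) ⊗ₜ[ℤ] g)) = (1 : ℚ) ⊗ₜ[ℤ] g := by
    rw [← Nat.cast_smul_eq_nsmul ℚ, smul_smul, mul_inv_cancel₀ (by positivity), one_smul]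
  apply nsmul_right_injective hn.ne'
  simp only [← map_nsmul, hg, h]

noncomputable def AddMonoidHom.ratTensorLift {K : Type*} [DivisionRing K] [CharZero K]
    (L : G →+ K) : ℚ ⊗[ℤ] G →ₗ[ℤ] K :=
  TensorProduct.lift
    ((LinearMap.mul ℤ K).compl₁₂ (Rat.castHom K).toIntAlgHom.toLinearMap L.toIntLinearMap)

@[simp]
theorem AddMonoidHom.ratTensorLift_tmul {K : Type*} [DivisionRing K] [CharZero K]
    (L : G →+ K) (q : ℚ) (g : G) : L.ratTensorLift (q ⊗ₜ[ℤ] g) = q * L g :=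
  rfl

end

section Ordered

variable {G : Type*} [AddCommGroup G] [PartialOrder G]

theorem one_tmul_mem_qTensorCone {g : G} (hg : 0 ≤ g) : (1 : ℚ) ⊗ₜ[ℤ] g ∈ qTensorCone G :=
  ⟨1, g, zero_le_one, hg, (one_smul _ _).symm⟩

theorem exists_nsmul_one_tmul_bounds [IsOrderedAddMonoid G] {u : G} (hu0 : 0 ≤ u)
    (hu : ∀ g : G, ∃ n : ℕ, -(n • u) ≤ g ∧ g ≤ n • u) (x : ℚ ⊗[ℤ] G) :
    ∃ m : ℕ, x + m • ((1 : ℚ) ⊗ₜ[ℤ] u) ∈ qTensorCone G ∧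
      m • ((1 : ℚ) ⊗ₜ[ℤ] u) - x ∈ qTensorCone G := by
  obtain ⟨n, g, hn, rfl⟩ := exists_eq_inv_natCast_smul_one_tmul x
  obtain ⟨m, hgm⟩ := hu g
  have hmu : m • ((1 : ℚ) ⊗ₜ[ℤ] u) = (n : ℚ)⁻¹ • ((1 : ℚ) ⊗ₜ[ℤ] ((n * m) • u)) := by
    rw [tmul_smul, ← Nat.cast_smul_eq_nsmul ℚ, ← Nat.cast_smul_eq_nsmul ℚ, smul_smul]
    congr 1
    field_simp
    push_cast
    ring
  -- `m • u` bounds `g`, hence `x = g / n` too: rescaled by `n`, the bound becomes `(n * m) • u`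
  have hle : m • u ≤ (n * m) • u := nsmul_le_nsmul_left hu0 (Nat.le_mul_of_pos_left m hn)
  have hinv : (0 : ℚ) ≤ (n : ℚ)⁻¹ := by positivity
  refine ⟨m, ⟨_, _, hinv, ?_, by rw [hmu, ← smul_add, ← tmul_add]⟩,
    ⟨_, _, hinv, ?_, by rw [hmu, ← smul_sub, ← tmul_sub]⟩⟩
  · exact neg_le_iff_add_nonneg.mp ((neg_le_neg hle).trans hgm.1)
  · exact sub_nonneg.mpr (hgm.2.trans hle)

theorem IsTensorStateOn.isStateOn_one_tmul {u : G} {φ : ℚ ⊗[ℤ] G → ℝ}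
    (hφ : IsTensorStateOn u φ) : IsStateOn u (fun g : G => φ ((1 : ℚ) ⊗ₜ[ℤ] g)) :=
  ⟨fun a b => by simp only [tmul_add, hφ.1], fun _ ha => hφ.2.1 _ (one_tmul_mem_qTensorCone ha),
    hφ.2.2⟩

theorem IsStateOn.isTensorStateOn_ratTensorLift {u : G} {ψ : G → ℝ} (hψ : IsStateOn u ψ) :
    IsTensorStateOn u (AddMonoidHom.mk' ψ hψ.1).ratTensorLift := by
  refine ⟨map_add _, ?_, ?_⟩
  · rintro _ ⟨q, g, hq, hg, rfl⟩
    rw [smul_tmul', smul_eq_mul, mul_one, AddMonoidHom.ratTensorLift_tmul]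
    exact mul_nonneg (by exact_mod_cast hq) (hψ.2.1 g hg)
  · simp [hψ.2.2]

theorem IsTensorStateOn.ext {u v : G} {φ φ' : ℚ ⊗[ℤ] G → ℝ} (hφ : IsTensorStateOn u φ)
    (hφ' : IsTensorStateOn v φ') (h : ∀ g : G, φ ((1 : ℚ) ⊗ₜ[ℤ] g) = φ' ((1 : ℚ) ⊗ₜ[ℤ] g)) :
    φ = φ' :=
  congrArg DFunLike.coe (AddMonoidHom.ext_ratTensor (φ := .mk' φ hφ.1) (ψ := .mk' φ' hφ'.1) h)

end Ordered

theorem stmt6_general {G : Type*} [AddCommGroup G] [PartialOrder G]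
    (hadd : ∀ g h x : G, g ≤ h → g + x ≤ h + x)
    (u : G) (hu : 0 ≤ u ∧ ∀ g : G, ∃ n : ℕ, -(n • u) ≤ g ∧ g ≤ n • u) :
    ((1 : ℚ) ⊗ₜ[ℤ] u ∈ qTensorCone G ∧
      ∀ x : ℚ ⊗[ℤ] G, ∃ n : ℕ,
        x + n • ((1 : ℚ) ⊗ₜ[ℤ] u) ∈ qTensorCone G ∧
        n • ((1 : ℚ) ⊗ₜ[ℤ] u) - x ∈ qTensorCone G) ∧
    (∀ φ : ℚ ⊗[ℤ] G → ℝ, IsTensorStateOn u φ →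
      IsStateOn u (fun g : G => φ ((1 : ℚ) ⊗ₜ[ℤ] g))) ∧
    (∀ ψ : G → ℝ, IsStateOn u ψ →
      ∃! φ : ℚ ⊗[ℤ] G → ℝ, IsTensorStateOn u φ ∧
        (fun g : G => φ ((1 : ℚ) ⊗ₜ[ℤ] g)) = ψ) := by
  have : IsOrderedAddMonoid G := { add_le_add_left := fun a b hab c => hadd a b c hab }
  refine ⟨⟨one_tmul_mem_qTensorCone hu.1, exists_nsmul_one_tmul_bounds hu.1 hu.2⟩,
    fun φ hφ => hφ.isStateOn_one_tmul, fun ψ hψ => ⟨_, ⟨hψ.isTensorStateOn_ratTensorLift, ?_⟩, ?_⟩⟩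
  · ext g
    simp
  · rintro φ ⟨hφ, rfl⟩
    exact hφ.ext hψ.isTensorStateOn_ratTensorLift fun g => by simp

/-- If `G` is an unperforated ordered abelian group with order unit `u`, then
`u ⊗ 1` is an order unit of `G ⊗_ℤ ℚ`, and restriction along `g ↦ g ⊗ 1` gives a
bijection between the states on `(G ⊗_ℤ ℚ, u ⊗ 1)` and the states on `(G, u)`. -/
theorem stmt6 {G : Type*} [AddCommGroup G] [PartialOrder G]
    (hadd : ∀ g h x : G, g ≤ h → g + x ≤ h + x)
    (hdir : ∀ g h : G, ∃ y : G, g ≤ y ∧ h ≤ y)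
    (hunperf : ∀ (n : ℕ) (g : G), 0 < n → 0 ≤ n • g → 0 ≤ g)
    (u : G) (hu : 0 ≤ u ∧ ∀ g : G, ∃ n : ℕ, -(n • u) ≤ g ∧ g ≤ n • u) :
    ((1 : ℚ) ⊗ₜ[ℤ] u ∈ qTensorCone G ∧
      ∀ x : ℚ ⊗[ℤ] G, ∃ n : ℕ,
        x + n • ((1 : ℚ) ⊗ₜ[ℤ] u) ∈ qTensorCone G ∧
        n • ((1 : ℚ) ⊗ₜ[ℤ] u) - x ∈ qTensorCone G) ∧
    (∀ φ : ℚ ⊗[ℤ] G → ℝ, IsTensorStateOn u φ →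
      IsStateOn u (fun g : G => φ ((1 : ℚ) ⊗ₜ[ℤ] g))) ∧
    (∀ ψ : G → ℝ, IsStateOn u ψ →
      ∃! φ : ℚ ⊗[ℤ] G → ℝ, IsTensorStateOn u φ ∧
        (fun g : G => φ ((1 : ℚ) ⊗ₜ[ℤ] g)) = ψ) :=
  stmt6_general hadd u hu
end

section
/- Let G be an ordered group with Riesz interpolation and I₁, I₂ ideals with I₁ + I₂ = G, with order units u, v₁, v₂ on G, I₁, I₂ respectively. Suppose τᵢ is an extreme state on (Iᵢ, vᵢ) for i = 1, 2, and that on I₁ ∩ I₂ the restrictions of τ₁ and τ₂ are nonzero scalar multiples of each other. Then there exists an extreme state τ on (G, u) such that τᵢ is a positive scalar multiple of τ|_{Iᵢ} for i = 1, 2. -/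
/-- The state space of an ordered abelian group `G` with order unit `u`. -/
def stateSet (G : Type*) [AddCommGroup G] [PartialOrder G] (u : G) :
    Set (G → ℝ) :=
  {f | (∀ a b : G, f (a + b) = f a + f b) ∧ (∀ a : G, 0 ≤ a → 0 ≤ f a) ∧ f u = 1}

/-- The state space of an ideal `I` (as a subgroup) with order unit `v ∈ I`. -/
def stateSetSub {G : Type*} [AddCommGroup G] [PartialOrder G] (I : AddSubgroup G)
    (v : I) : Set (I → ℝ) :=
  {f | (∀ a b : I, f (a + b) = f a + f b) ∧
       (∀ a : I, (0 : G) ≤ (a : G) → 0 ≤ f a) ∧ f v = 1}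

/-!
Since `τ₁` and `c • τ₂` agree on `I₁ ∩ I₂`, they glue to an additive `f : G → ℝ` on
`G = I₁ + I₂`. Riesz interpolation gives the decomposition `G⁺ = I₁⁺ + I₂⁺`, so `f` is positive
(`c > 0` because `I₁ ∩ I₂` is again a directed ideal on which `τ₁` does not vanish), and `f / f u`
is a state. If `f = σ + ρ` with `σ, ρ` positive, extremality of `τᵢ` forces `σ` to be
proportional to `f` on each `Iᵢ`; as `f` does not vanish on `I₁ ∩ I₂` the two constants agree,
so `σ` is a multiple of `f` on `I₁ + I₂ = G`. This is exactly extremality of `f / f u`.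
-/

open Set

theorem AddSubgroup.exists_addMonoidHom_eq_of_sup_eq_top {G N : Type*} [AddCommGroup G]
    [AddCommGroup N] {I₁ I₂ : AddSubgroup G} (hsum : I₁ ⊔ I₂ = ⊤) (f₁ : I₁ →+ N) (f₂ : I₂ →+ N)
    (hagree : ∀ (x : G) (h₁ : x ∈ I₁) (h₂ : x ∈ I₂), f₁ ⟨x, h₁⟩ = f₂ ⟨x, h₂⟩) :
    ∃ f : G →+ N, (∀ x : I₁, f x = f₁ x) ∧ ∀ x : I₂, f x = f₂ x := by
  -- `f₁ + f₂` descends along the surjection `I₁ × I₂ → G`, whose kernel is the antidiagonal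
  -- of `I₁ ∩ I₂`.
  set φ : I₁ × I₂ →+ G := I₁.subtype.coprod I₂.subtype
  have hφ : Function.Surjective φ := fun g => by
    obtain ⟨y₁, h₁, y₂, h₂, hy⟩ := AddSubgroup.mem_sup.mp (hsum ▸ AddSubgroup.mem_top g)
    exact ⟨(⟨y₁, h₁⟩, ⟨y₂, h₂⟩), hy⟩
  have hker : φ.ker ≤ (f₁.coprod f₂).ker := by
    rintro ⟨y₁, y₂⟩ hy
    have hy' : (y₁ : G) = -y₂ := eq_neg_of_add_eq_zero_left hy
    have h₂ : (y₁ : G) ∈ I₂ := hy' ▸ neg_mem y₂.2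
    rw [AddMonoidHom.mem_ker, AddMonoidHom.coprod_apply, hagree _ y₁.2 h₂,
      ← map_add, ← map_zero f₂]
    exact congrArg f₂ (Subtype.ext hy)
  refine ⟨φ.liftOfSurjective hφ ⟨_, hker⟩, fun x => ?_, fun x => ?_⟩
  · simpa [φ] using φ.liftOfRightInverse_comp_apply _ _ ⟨_, hker⟩ (x, 0)
  · simpa [φ] using φ.liftOfRightInverse_comp_apply _ _ ⟨_, hker⟩ (0, x)

theorem AddMonoidHom.eq_smul_of_eqOn_sup {G : Type*} [AddCommGroup G] {I₁ I₂ : AddSubgroup G}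
    (hsum : I₁ ⊔ I₂ = ⊤) {σ f : G →+ ℝ} {r₁ r₂ : ℝ} (h₁ : ∀ x ∈ I₁, σ x = r₁ * f x)
    (h₂ : ∀ x ∈ I₂, σ x = r₂ * f x) {x : G} (hx₁ : x ∈ I₁) (hx₂ : x ∈ I₂) (hfx : f x ≠ 0) :
    σ = r₁ • f := by
  obtain rfl : r₂ = r₁ := mul_right_cancel₀ hfx ((h₂ x hx₂).symm.trans (h₁ x hx₁))
  have hle : I₁ ⊔ I₂ ≤ σ.eqLocus (r₂ • f) := sup_le h₁ h₂
  exact AddMonoidHom.eq_of_eqOn_top fun g _ => hle (hsum ▸ AddSubgroup.mem_top g)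

def HasRieszInterpolation (G : Type*) [Preorder G] : Prop :=
  ∀ a₁ a₂ b₁ b₂ : G, a₁ ≤ b₁ → a₁ ≤ b₂ → a₂ ≤ b₁ → a₂ ≤ b₂ →
    ∃ z : G, a₁ ≤ z ∧ a₂ ≤ z ∧ z ≤ b₁ ∧ z ≤ b₂

structure AddSubgroup.IsOrderIdeal {G : Type*} [AddCommGroup G] [PartialOrder G]
    (I : AddSubgroup G) : Prop where
  ordConnected : (I : Set G).OrdConnected
  exists_nonneg_sub : ∀ x ∈ I, ∃ a ∈ I, ∃ b ∈ I, 0 ≤ a ∧ 0 ≤ b ∧ x = a - b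

section PartialOrder

variable {G : Type*} [AddCommGroup G] [PartialOrder G]

theorem AddSubgroup.IsOrderIdeal.exists_nonneg_pos {K : AddSubgroup G} (hK : K.IsOrderIdeal)
    {f : G →+ ℝ} (hf : ∀ a ∈ K, 0 ≤ a → 0 ≤ f a) {x : G} (hx : x ∈ K) (hfx : f x ≠ 0) :
    ∃ p ∈ K, 0 ≤ p ∧ 0 < f p := by
  obtain ⟨a, ha, b, hb, ha0, hb0, rfl⟩ := hK.exists_nonneg_sub x hx
  rw [map_sub, sub_ne_zero] at hfx
  rcases (hf a ha ha0).lt_or_eq with h | h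
  · exact ⟨a, ha, ha0, h⟩
  · exact ⟨b, hb, hb0, (hf b hb hb0).lt_of_ne (h ▸ hfx)⟩

theorem div_mem_stateSet {f : G →+ ℝ} (hf : ∀ a, 0 ≤ a → 0 ≤ f a) {u : G} (hfu : 0 < f u) :
    (fun g => f g / f u) ∈ stateSet G u :=
  ⟨fun a b => by simp only [map_add, add_div], fun a ha => div_nonneg (hf a ha) hfu.le,
    div_self hfu.ne'⟩

theorem div_mem_stateSetSub {f : G →+ ℝ} (hf : ∀ a, 0 ≤ a → 0 ≤ f a) {J : AddSubgroup G}
    {w : J} (hfw : 0 < f w) : (fun a : J => f a / f w) ∈ stateSetSub J w :=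
  ⟨fun a b => by simp only [AddSubgroup.coe_add, map_add, add_div],
    fun a ha => div_nonneg (hf a ha) hfw.le, div_self hfw.ne'⟩

theorem div_mem_extremePoints_stateSet {f : G →+ ℝ} (hf : ∀ a, 0 ≤ a → 0 ≤ f a) {u : G}
    (hfu : 0 < f u)
    (hray : ∀ σ ρ : G →+ ℝ, (∀ a, 0 ≤ a → 0 ≤ σ a) → (∀ a, 0 ≤ a → 0 ≤ ρ a) → σ + ρ = f →
      ∃ r : ℝ, σ = r • f) :
    (fun g => f g / f u) ∈ extremePoints ℝ (stateSet G u) := by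
  refine ⟨div_mem_stateSet hf hfu, ?_⟩
  rintro σ ⟨hσadd, hσpos, hσu⟩ ρ ⟨hρadd, hρpos, -⟩ ⟨t, s, ht, hs, -, hts⟩
  have hcomb : ∀ g, t * f u * σ g + s * f u * ρ g = f g := fun g => by
    have := congrFun hts g
    simp only [Pi.add_apply, Pi.smul_apply, smul_eq_mul] at this
    rw [mul_comm t, mul_comm s, mul_assoc, mul_assoc, ← mul_add, this, mul_div_cancel₀ _ hfu.ne']
  obtain ⟨r, hr⟩ := hray ((t * f u) • .mk' σ hσadd) ((s * f u) • .mk' ρ hρadd)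
    (fun a ha => mul_nonneg (by positivity) (hσpos a ha))
    (fun a ha => mul_nonneg (by positivity) (hρpos a ha))
    (by ext g; simpa using hcomb g)
  have hσ : ∀ g, t * f u * σ g = r * f g := fun g => by
    simpa using DFunLike.congr_fun hr g
  have hr : r = t := mul_right_cancel₀ hfu.ne' (by rw [← hσ u, hσu, mul_one])
  funext g
  rw [eq_div_iff hfu.ne']
  refine mul_left_cancel₀ ht.ne' ?_
  linear_combination hσ g + f g * hr

end PartialOrder

section OrderedGroup

variable {G : Type*} [AddCommGroup G] [PartialOrder G] [IsOrderedAddMonoid G]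

theorem HasRieszInterpolation.exists_riesz_decomposition (hR : HasRieszInterpolation G)
    {g a b : G} (hg : 0 ≤ g) (ha : 0 ≤ a) (hb : 0 ≤ b) (h : g ≤ a + b) :
    ∃ z, 0 ≤ z ∧ z ≤ a ∧ z ≤ g ∧ g - z ≤ b := by
  obtain ⟨z, h0z, hz, hza, hzg⟩ := hR 0 (g - b) a g ha hg (sub_le_iff_le_add.2 h)
    (sub_le_self g hb)
  exact ⟨z, h0z, hza, hzg, sub_le_comm.1 hz⟩

theorem HasRieszInterpolation.exists_nonneg_split (hR : HasRieszInterpolation G)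
    {I₁ I₂ : AddSubgroup G} (hI₁ : I₁.IsOrderIdeal) (hI₂ : I₂.IsOrderIdeal)
    (hsum : I₁ ⊔ I₂ = ⊤) {g : G} (hg : 0 ≤ g) : ∃ z ∈ I₁, g - z ∈ I₂ ∧ 0 ≤ z ∧ z ≤ g := by
  obtain ⟨y₁, hy₁, y₂, hy₂, rfl⟩ := AddSubgroup.mem_sup.mp (hsum ▸ AddSubgroup.mem_top g)
  obtain ⟨a₁, ha₁, b₁, -, ha₁0, hb₁0, rfl⟩ := hI₁.exists_nonneg_sub y₁ hy₁
  obtain ⟨a₂, ha₂, b₂, -, ha₂0, hb₂0, rfl⟩ := hI₂.exists_nonneg_sub y₂ hy₂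
  have hle : a₁ - b₁ + (a₂ - b₂) ≤ a₁ + a₂ := by
    rw [sub_add_sub_comm]; exact sub_le_self _ (add_nonneg hb₁0 hb₂0)
  obtain ⟨z, hz0, hza, hzg, hgz⟩ := hR.exists_riesz_decomposition hg ha₁0 ha₂0 hle
  exact ⟨z, hI₁.ordConnected.out I₁.zero_mem ha₁ ⟨hz0, hza⟩,
    hI₂.ordConnected.out I₂.zero_mem ha₂ ⟨sub_nonneg.2 hzg, hgz⟩, hz0, hzg⟩

theorem HasRieszInterpolation.map_nonneg_of_sup_eq_top (hR : HasRieszInterpolation G)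
    {I₁ I₂ : AddSubgroup G} (hI₁ : I₁.IsOrderIdeal) (hI₂ : I₂.IsOrderIdeal)
    (hsum : I₁ ⊔ I₂ = ⊤) {f : G →+ ℝ} (hf₁ : ∀ a ∈ I₁, 0 ≤ a → 0 ≤ f a)
    (hf₂ : ∀ a ∈ I₂, 0 ≤ a → 0 ≤ f a) {g : G} (hg : 0 ≤ g) : 0 ≤ f g := by
  obtain ⟨z, hz₁, hz₂, hz0, hzg⟩ := hR.exists_nonneg_split hI₁ hI₂ hsum hg
  rw [← add_sub_cancel z g, map_add]
  exact add_nonneg (hf₁ z hz₁ hz0) (hf₂ _ hz₂ (sub_nonneg.2 hzg))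

theorem AddSubgroup.IsOrderIdeal.inf {I₁ I₂ : AddSubgroup G} (hI₁ : I₁.IsOrderIdeal)
    (hI₂ : I₂.IsOrderIdeal) (hR : HasRieszInterpolation G) : (I₁ ⊓ I₂).IsOrderIdeal := by
  refine ⟨by rw [AddSubgroup.coe_inf]; exact hI₁.ordConnected.inter hI₂.ordConnected, ?_⟩
  rintro x ⟨hx₁, hx₂⟩
  obtain ⟨a₁, ha₁, b₁, -, ha₁0, hb₁0, hxa₁⟩ := hI₁.exists_nonneg_sub x hx₁
  obtain ⟨a₂, ha₂, b₂, -, ha₂0, hb₂0, hxa₂⟩ := hI₂.exists_nonneg_sub x hx₂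
  obtain ⟨z, hxz, h0z, hza₁, hza₂⟩ := hR x 0 a₁ a₂
    (hxa₁ ▸ sub_le_self a₁ hb₁0) (hxa₂ ▸ sub_le_self a₂ hb₂0) ha₁0 ha₂0
  have hz : z ∈ I₁ ⊓ I₂ := ⟨hI₁.ordConnected.out I₁.zero_mem ha₁ ⟨h0z, hza₁⟩,
    hI₂.ordConnected.out I₂.zero_mem ha₂ ⟨h0z, hza₂⟩⟩
  exact ⟨z, hz, z - x, sub_mem hz ⟨hx₁, hx₂⟩, h0z, sub_nonneg.2 hxz, (sub_sub_cancel z x).symm⟩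

theorem AddMonoidHom.map_eq_zero_of_neg_nsmul_le_of_le_nsmul {f : G →+ ℝ}
    (hf : ∀ a, 0 ≤ a → 0 ≤ f a) {w g : G} (hw : f w = 0) {n : ℕ} (h₁ : -(n • w) ≤ g)
    (h₂ : g ≤ n • w) : f g = 0 := by
  have hlo := hf _ (sub_nonneg.2 h₁)
  have hhi := hf _ (sub_nonneg.2 h₂)
  simp only [map_sub, map_neg, map_nsmul, hw, smul_zero] at hlo hhi
  linarith

theorem AddMonoidHom.map_pos_of_ne_zero {f : G →+ ℝ} (hf : ∀ a, 0 ≤ a → 0 ≤ f a) {u : G}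
    (hu0 : 0 ≤ u) (hu : ∀ g : G, ∃ n : ℕ, -(n • u) ≤ g ∧ g ≤ n • u) {x : G} (hfx : f x ≠ 0) :
    0 < f u := by
  refine (hf u hu0).lt_of_ne fun hfu => hfx ?_
  obtain ⟨n, h₁, h₂⟩ := hu x
  exact f.map_eq_zero_of_neg_nsmul_le_of_le_nsmul hf hfu.symm h₁ h₂

theorem eq_mul_of_add_eq_mul_of_mem_extremePoints {J : AddSubgroup G} {w : G} (hwJ : w ∈ J)
    (hw0 : 0 ≤ w) (hw : ∀ g ∈ J, ∃ n : ℕ, -(n • w) ≤ g ∧ g ≤ n • w) {π : J → ℝ}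
    (hπ : π ∈ extremePoints ℝ (stateSetSub J ⟨w, hwJ⟩)) {σ ρ : G →+ ℝ}
    (hσ : ∀ a, 0 ≤ a → 0 ≤ σ a) (hρ : ∀ a, 0 ≤ a → 0 ≤ ρ a) {d : ℝ}
    (hsum : ∀ x : J, σ x + ρ x = d * π x) (x : J) : σ x = σ w * π x := by
  obtain ⟨⟨-, -, hπw⟩, hπext⟩ := hπ
  have hd : σ w + ρ w = d := by simpa [hπw] using hsum ⟨w, hwJ⟩
  obtain ⟨n, hx₁, hx₂⟩ := hw x x.2
  rcases (hσ w hw0).eq_or_lt with hσw | hσw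
  · rw [← hσw, zero_mul]
    exact σ.map_eq_zero_of_neg_nsmul_le_of_le_nsmul hσ hσw.symm hx₁ hx₂
  rcases (hρ w hw0).eq_or_lt with hρw | hρw
  · have hρx := ρ.map_eq_zero_of_neg_nsmul_le_of_le_nsmul hρ hρw.symm hx₁ hx₂
    rw [← hρw, add_zero] at hd
    simpa [hρx, hd] using hsum x
  have hseg : π ∈ openSegment ℝ (fun a : J => σ a / σ w) (fun a : J => ρ a / ρ w) := by
    subst hd
    refine ⟨σ w / (σ w + ρ w), ρ w / (σ w + ρ w), by positivity, by positivity,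
      by rw [← add_div, div_self (by positivity)], ?_⟩
    funext a
    simp only [Pi.add_apply, Pi.smul_apply, smul_eq_mul]
    field_simp
    linarith [hsum a]
  have := congrFun (hπext (div_mem_stateSetSub hσ hσw) (div_mem_stateSetSub hρ hρw) hseg) x
  rw [← this]
  field_simp

theorem exists_eq_mul_on_of_add_eq_of_mem_extremePoints {J : AddSubgroup G} {w : G}
    (hwJ : w ∈ J) (hw0 : 0 ≤ w) (hw : ∀ g ∈ J, ∃ n : ℕ, -(n • w) ≤ g ∧ g ≤ n • w) {π : J → ℝ}
    (hπ : π ∈ extremePoints ℝ (stateSetSub J ⟨w, hwJ⟩)) {f : G →+ ℝ} {d : ℝ} (hd : d ≠ 0)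
    (hf : ∀ x : J, f x = d * π x) {σ ρ : G →+ ℝ} (hσ : ∀ a, 0 ≤ a → 0 ≤ σ a)
    (hρ : ∀ a, 0 ≤ a → 0 ≤ ρ a) (hsum : σ + ρ = f) : ∃ r : ℝ, ∀ x ∈ J, σ x = r * f x := by
  refine ⟨σ w / d, fun x hx => ?_⟩
  have hσρ : ∀ y : J, σ y + ρ y = d * π y := fun y => by
    rw [← hf, ← hsum, AddMonoidHom.add_apply]
  rw [eq_mul_of_add_eq_mul_of_mem_extremePoints hwJ hw0 hw hπ hσ hρ hσρ ⟨x, hx⟩, hf ⟨x, hx⟩]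
  field_simp

theorem exists_eq_smul_of_add_eq_of_mem_extremePoints {I₁ I₂ : AddSubgroup G}
    (hsum : I₁ ⊔ I₂ = ⊤) {v₁ v₂ : G} (hv₁I : v₁ ∈ I₁) (hv₂I : v₂ ∈ I₂)
    (hv₁ : 0 ≤ v₁ ∧ ∀ g ∈ I₁, ∃ n : ℕ, -(n • v₁) ≤ g ∧ g ≤ n • v₁)
    (hv₂ : 0 ≤ v₂ ∧ ∀ g ∈ I₂, ∃ n : ℕ, -(n • v₂) ≤ g ∧ g ≤ n • v₂)
    {τ₁ : I₁ → ℝ} (hτ₁ : τ₁ ∈ extremePoints ℝ (stateSetSub I₁ ⟨v₁, hv₁I⟩))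
    {τ₂ : I₂ → ℝ} (hτ₂ : τ₂ ∈ extremePoints ℝ (stateSetSub I₂ ⟨v₂, hv₂I⟩))
    {f : G →+ ℝ} {c : ℝ} (hc : c ≠ 0) (hf₁ : ∀ x : I₁, f x = τ₁ x)
    (hf₂ : ∀ x : I₂, f x = c * τ₂ x) {x : G} (hx₁ : x ∈ I₁) (hx₂ : x ∈ I₂) (hfx : f x ≠ 0)
    {σ ρ : G →+ ℝ} (hσ : ∀ a, 0 ≤ a → 0 ≤ σ a) (hρ : ∀ a, 0 ≤ a → 0 ≤ ρ a)
    (hσρ : σ + ρ = f) : ∃ r : ℝ, σ = r • f := by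
  obtain ⟨r₁, h₁⟩ := exists_eq_mul_on_of_add_eq_of_mem_extremePoints hv₁I hv₁.1 hv₁.2 hτ₁
    one_ne_zero (fun y => (hf₁ y).trans (one_mul _).symm) hσ hρ hσρ
  obtain ⟨r₂, h₂⟩ := exists_eq_mul_on_of_add_eq_of_mem_extremePoints hv₂I hv₂.1 hv₂.2 hτ₂
    hc hf₂ hσ hρ hσρ
  exact ⟨r₁, σ.eq_smul_of_eqOn_sup hsum h₁ h₂ hx₁ hx₂ hfx⟩

end OrderedGroup

theorem stmt9_general {G : Type*} [AddCommGroup G] [PartialOrder G]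
    (hadd : ∀ g h x : G, g ≤ h → g + x ≤ h + x)
    (hRiesz : ∀ a₁ a₂ b₁ b₂ : G, a₁ ≤ b₁ → a₁ ≤ b₂ → a₂ ≤ b₁ → a₂ ≤ b₂ →
      ∃ z : G, a₁ ≤ z ∧ a₂ ≤ z ∧ z ≤ b₁ ∧ z ≤ b₂)
    (I₁ I₂ : AddSubgroup G)
    (hconv₁ : ∀ g h x : G, g ∈ I₁ → h ∈ I₁ → g ≤ x → x ≤ h → x ∈ I₁)
    (hdir₁ : ∀ x ∈ I₁, ∃ a ∈ I₁, ∃ b ∈ I₁, 0 ≤ a ∧ 0 ≤ b ∧ x = a - b)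
    (hconv₂ : ∀ g h x : G, g ∈ I₂ → h ∈ I₂ → g ≤ x → x ≤ h → x ∈ I₂)
    (hdir₂ : ∀ x ∈ I₂, ∃ a ∈ I₂, ∃ b ∈ I₂, 0 ≤ a ∧ 0 ≤ b ∧ x = a - b)
    (hsum : I₁ ⊔ I₂ = ⊤)
    (u : G) (hu : 0 ≤ u ∧ ∀ g : G, ∃ n : ℕ, -(n • u) ≤ g ∧ g ≤ n • u)
    (v₁ : G) (hv₁I : v₁ ∈ I₁)
    (hv₁ : 0 ≤ v₁ ∧ ∀ g ∈ I₁, ∃ n : ℕ, -(n • v₁) ≤ g ∧ g ≤ n • v₁)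
    (v₂ : G) (hv₂I : v₂ ∈ I₂)
    (hv₂ : 0 ≤ v₂ ∧ ∀ g ∈ I₂, ∃ n : ℕ, -(n • v₂) ≤ g ∧ g ≤ n • v₂)
    (τ₁ : I₁ → ℝ) (hτ₁ : τ₁ ∈ Set.extremePoints ℝ (stateSetSub I₁ ⟨v₁, hv₁I⟩))
    (τ₂ : I₂ → ℝ) (hτ₂ : τ₂ ∈ Set.extremePoints ℝ (stateSetSub I₂ ⟨v₂, hv₂I⟩))
    (hnonzero : ∃ (x : G) (h₁ : x ∈ I₁), x ∈ I₂ ∧ τ₁ ⟨x, h₁⟩ ≠ 0)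
    (hscalar : ∃ c : ℝ, c ≠ 0 ∧ ∀ (x : G) (h₁ : x ∈ I₁) (h₂ : x ∈ I₂),
      τ₁ ⟨x, h₁⟩ = c * τ₂ ⟨x, h₂⟩) :
    ∃ τ ∈ Set.extremePoints ℝ (stateSet G u),
      ∃ c₁ c₂ : ℝ, 0 < c₁ ∧ 0 < c₂ ∧
        (∀ x : I₁, τ₁ x = c₁ * τ (x : G)) ∧
        (∀ x : I₂, τ₂ x = c₂ * τ (x : G)) := by
  have : IsOrderedAddMonoid G := { add_le_add_left := fun a b h c => hadd a b c h }
  have hR : HasRieszInterpolation G := hRiesz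
  have hI₁ : I₁.IsOrderIdeal := ⟨⟨fun g hg h hh x hx => hconv₁ g h x hg hh hx.1 hx.2⟩, hdir₁⟩
  have hI₂ : I₂.IsOrderIdeal := ⟨⟨fun g hg h hh x hx => hconv₂ g h x hg hh hx.1 hx.2⟩, hdir₂⟩
  obtain ⟨hτ₁add, hτ₁pos, -⟩ := hτ₁.1
  obtain ⟨hτ₂add, hτ₂pos, -⟩ := hτ₂.1
  obtain ⟨c, hc, hcτ⟩ := hscalar
  obtain ⟨f, hf₁, hf₂⟩ : ∃ f : G →+ ℝ, (∀ x : I₁, f x = τ₁ x) ∧ ∀ x : I₂, f x = c * τ₂ x :=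
    AddSubgroup.exists_addMonoidHom_eq_of_sup_eq_top hsum (.mk' τ₁ hτ₁add)
      (c • AddMonoidHom.mk' τ₂ hτ₂add) hcτ
  obtain ⟨x, hx₁, hx₂, hτ₁x⟩ := hnonzero
  have hfx : f x ≠ 0 := by rwa [hf₁ ⟨x, hx₁⟩]
  have hf₁pos : ∀ a ∈ I₁, 0 ≤ a → 0 ≤ f a := fun a ha ha0 => (hf₁ ⟨a, ha⟩).symm ▸ hτ₁pos _ ha0
  obtain ⟨p, ⟨-, hp₂⟩, hp0, hfp⟩ := (hI₁.inf hI₂ hR).exists_nonneg_pos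
    (fun a ha => hf₁pos a ha.1) ⟨hx₁, hx₂⟩ hfx
  have hc0 : 0 < c := pos_of_mul_pos_left (hf₂ ⟨p, hp₂⟩ ▸ hfp) (hτ₂pos _ hp0)
  have hf : ∀ g, 0 ≤ g → 0 ≤ f g := fun g => hR.map_nonneg_of_sup_eq_top hI₁ hI₂ hsum hf₁pos
    fun a ha ha0 => (hf₂ ⟨a, ha⟩).symm ▸ mul_nonneg hc0.le (hτ₂pos _ ha0)
  have hfu : 0 < f u := f.map_pos_of_ne_zero hf hu.1 hu.2 hfx
  refine ⟨fun g => f g / f u, div_mem_extremePoints_stateSet hf hfu fun σ ρ =>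
      exists_eq_smul_of_add_eq_of_mem_extremePoints hsum hv₁I hv₂I hv₁ hv₂ hτ₁ hτ₂ hc hf₁ hf₂
        hx₁ hx₂ hfx,
    f u, f u / c, hfu, div_pos hfu hc0, fun y => ?_, fun y => ?_⟩
  · dsimp only; rw [hf₁ y]; field_simp
  · dsimp only; rw [hf₂ y]; field_simp

/-- Pull-back of extreme states: if `G` has Riesz interpolation, `I₁ + I₂ = G`
for ideals `I₁, I₂`, and `τᵢ` are extreme states on `(Iᵢ, vᵢ)` whose
restrictions to `I₁ ∩ I₂` are nonzero scalar multiples of each other, then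
there is an extreme state `τ` on `(G, u)` with `τᵢ` a positive scalar multiple
of `τ|_{Iᵢ}` for `i = 1, 2`. -/
theorem stmt9 {G : Type*} [AddCommGroup G] [PartialOrder G]
    (hadd : ∀ g h x : G, g ≤ h → g + x ≤ h + x)
    (hdir : ∀ g h : G, ∃ y : G, g ≤ y ∧ h ≤ y)
    (hRiesz : ∀ a₁ a₂ b₁ b₂ : G, a₁ ≤ b₁ → a₁ ≤ b₂ → a₂ ≤ b₁ → a₂ ≤ b₂ →
      ∃ z : G, a₁ ≤ z ∧ a₂ ≤ z ∧ z ≤ b₁ ∧ z ≤ b₂)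
    (I₁ I₂ : AddSubgroup G)
    (hconv₁ : ∀ g h x : G, g ∈ I₁ → h ∈ I₁ → g ≤ x → x ≤ h → x ∈ I₁)
    (hdir₁ : ∀ x ∈ I₁, ∃ a ∈ I₁, ∃ b ∈ I₁, 0 ≤ a ∧ 0 ≤ b ∧ x = a - b)
    (hconv₂ : ∀ g h x : G, g ∈ I₂ → h ∈ I₂ → g ≤ x → x ≤ h → x ∈ I₂)
    (hdir₂ : ∀ x ∈ I₂, ∃ a ∈ I₂, ∃ b ∈ I₂, 0 ≤ a ∧ 0 ≤ b ∧ x = a - b)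
    (hsum : I₁ ⊔ I₂ = ⊤)
    (u : G) (hu : 0 ≤ u ∧ ∀ g : G, ∃ n : ℕ, -(n • u) ≤ g ∧ g ≤ n • u)
    (v₁ : G) (hv₁I : v₁ ∈ I₁)
    (hv₁ : 0 ≤ v₁ ∧ ∀ g ∈ I₁, ∃ n : ℕ, -(n • v₁) ≤ g ∧ g ≤ n • v₁)
    (v₂ : G) (hv₂I : v₂ ∈ I₂)
    (hv₂ : 0 ≤ v₂ ∧ ∀ g ∈ I₂, ∃ n : ℕ, -(n • v₂) ≤ g ∧ g ≤ n • v₂)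
    (τ₁ : I₁ → ℝ) (hτ₁ : τ₁ ∈ Set.extremePoints ℝ (stateSetSub I₁ ⟨v₁, hv₁I⟩))
    (τ₂ : I₂ → ℝ) (hτ₂ : τ₂ ∈ Set.extremePoints ℝ (stateSetSub I₂ ⟨v₂, hv₂I⟩))
    (hnonzero : ∃ (x : G) (h₁ : x ∈ I₁), x ∈ I₂ ∧ τ₁ ⟨x, h₁⟩ ≠ 0)
    (hscalar : ∃ c : ℝ, c ≠ 0 ∧ ∀ (x : G) (h₁ : x ∈ I₁) (h₂ : x ∈ I₂),
      τ₁ ⟨x, h₁⟩ = c * τ₂ ⟨x, h₂⟩) :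
    ∃ τ ∈ Set.extremePoints ℝ (stateSet G u),
      ∃ c₁ c₂ : ℝ, 0 < c₁ ∧ 0 < c₂ ∧
        (∀ x : I₁, τ₁ x = c₁ * τ (x : G)) ∧
        (∀ x : I₂, τ₂ x = c₂ * τ (x : G)) :=
  stmt9_general hadd hRiesz I₁ I₂ hconv₁ hdir₁ hconv₂ hdir₂ hsum u hu v₁ hv₁I hv₁ v₂ hv₂I hv₂ τ₁ hτ₁
    τ₂ hτ₂ hnonzero hscalar
end

section
/- Suppose the ideals of an ordered group G satisfy the descending chain condition, and let I be a proper ideal of G. Then either I = J₁ ∩ J₂ for ideals J₁, J₂ both properly containing I, or there exists a unique ideal I′ properly containing I that is contained in every ideal properly containing I. -/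
/-!
Let `S` be the set of ideals properly containing `I`; it contains `⊤`. If `I` is not the meet of
two members of `S`, then `S` is closed under `⊓`. By the descending chain condition `S` has a
minimal member, and in a set closed under `⊓` a minimal member is the least one.
-/

theorem Set.wellFoundedOn_lt_of_forall_antitone_stabilizes {α : Type*} [PartialOrder α]
    {s : Set α} (h : ∀ f : ℕ → α, (∀ i, f i ∈ s) → (∀ i, f (i + 1) ≤ f i) →
      ∃ N, ∀ m, N ≤ m → f m = f N) :
    s.WellFoundedOn (· < ·) := by
  rw [Set.wellFoundedOn_iff_no_descending_seq]
  intro f hfs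
  have hdec : ∀ n, f (n + 1) < f n := fun n => f.map_rel_iff.2 n.lt_succ_self
  obtain ⟨N, hN⟩ := h f hfs fun n => (hdec n).le
  exact (hdec N).ne (hN (N + 1) N.le_succ)

theorem Minimal.isLeast_of_inf_mem {α : Type*} [SemilatticeInf α] {s : Set α} {m : α}
    (hs : ∀ a ∈ s, ∀ b ∈ s, a ⊓ b ∈ s) (hm : Minimal (· ∈ s) m) : IsLeast s m :=
  ⟨hm.prop, fun b hb => (hm.le_of_le (hs m hm.prop b hb) inf_le_left).trans inf_le_right⟩

section OrderIdeal

variable {G : Type*} [AddCommGroup G] [PartialOrder G]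

theorem isOrderIdeal_top (hadd : ∀ g h x : G, g ≤ h → g + x ≤ h + x)
    (hdir : ∀ g h : G, ∃ y : G, g ≤ y ∧ h ≤ y) :
    IsOrderIdeal (⊤ : AddSubgroup G) := by
  refine ⟨fun _ _ _ _ _ _ _ => trivial, fun x _ => ?_⟩
  obtain ⟨y, hxy, hy⟩ := hdir x 0
  have hyx : 0 ≤ y - x := by simpa [sub_eq_add_neg] using hadd x y (-x) hxy
  exact ⟨y, trivial, y - x, trivial, hy, hyx, (sub_sub_cancel y x).symm⟩

theorem IsOrderIdeal.inf
    (hInf : ∀ (𝒥 : Set (AddSubgroup G)) (K : AddSubgroup G), IsOrderIdeal K →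
      𝒥.Nonempty → (∀ J ∈ 𝒥, IsOrderIdeal J ∧ K ≤ J) → IsOrderIdeal (sInf 𝒥))
    {I J K : AddSubgroup G} (hI : IsOrderIdeal I) (hJ : IsOrderIdeal J) (hK : IsOrderIdeal K)
    (hIJ : I ≤ J) (hIK : I ≤ K) : IsOrderIdeal (J ⊓ K) := by
  rw [← sInf_pair]
  refine hInf {J, K} I hI (Set.insert_nonempty J {K}) ?_
  rintro L (rfl | rfl)
  exacts [⟨hJ, hIJ⟩, ⟨hK, hIK⟩]

end OrderIdeal

/-- If the ideals of an ordered abelian group satisfy the descending chain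
condition (and intersections of nonempty families of ideals containing a given
ideal are ideals), then any proper ideal `I` either is the proper intersection
of two ideals, or has a unique minimum properly containing ideal `I′`. -/
theorem stmt10 {G : Type*} [AddCommGroup G] [PartialOrder G]
    (hadd : ∀ g h x : G, g ≤ h → g + x ≤ h + x)
    (hdir : ∀ g h : G, ∃ y : G, g ≤ y ∧ h ≤ y)
    (hInf : ∀ (𝒥 : Set (AddSubgroup G)) (K : AddSubgroup G), IsOrderIdeal K →
      𝒥.Nonempty → (∀ J ∈ 𝒥, IsOrderIdeal J ∧ K ≤ J) → IsOrderIdeal (sInf 𝒥))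
    (hDCC : ∀ f : ℕ → AddSubgroup G, (∀ i, IsOrderIdeal (f i)) →
      (∀ i, f (i + 1) ≤ f i) → ∃ N, ∀ m, N ≤ m → f m = f N)
    (I : AddSubgroup G) (hI : IsOrderIdeal I) (hproper : I ≠ ⊤) :
    (∃ J₁ J₂ : AddSubgroup G, IsOrderIdeal J₁ ∧ IsOrderIdeal J₂ ∧
      I = J₁ ⊓ J₂ ∧ I < J₁ ∧ I < J₂) ∨
    (∃! I' : AddSubgroup G, IsOrderIdeal I' ∧ I < I' ∧
      ∀ J : AddSubgroup G, IsOrderIdeal J → I < J → I' ≤ J) := by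
  refine or_iff_not_imp_left.2 fun hirred => ?_
  set S : Set (AddSubgroup G) := {J | IsOrderIdeal J ∧ I < J}
  have hS_inf : ∀ J ∈ S, ∀ K ∈ S, J ⊓ K ∈ S := fun J hJ K hK =>
    ⟨hI.inf hInf hJ.1 hK.1 hJ.2.le hK.2.le, (le_inf hJ.2.le hK.2.le).lt_of_ne
      fun h => hirred ⟨J, K, hJ.1, hK.1, h, hJ.2, hK.2⟩⟩
  have hS_wf : S.WellFoundedOn (· < ·) :=
    (Set.wellFoundedOn_lt_of_forall_antitone_stabilizes (s := {J | IsOrderIdeal J}) hDCC).subset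
      fun J hJ => hJ.1
  have hS_top : ⊤ ∈ S := ⟨isOrderIdeal_top hadd hdir, hproper.lt_top⟩
  obtain ⟨M, hM⟩ := hS_wf.exists_minimal ⟨⊤, hS_top⟩
  have hleast : IsLeast S M := hM.isLeast_of_inf_mem hS_inf
  refine ⟨M, ⟨hleast.1.1, hleast.1.2, fun J hJ hIJ => hleast.2 ⟨hJ, hIJ⟩⟩, ?_⟩
  rintro J ⟨hJ, hIJ, hJleast⟩
  exact hleast.unique ⟨⟨hJ, hIJ⟩, fun K hK => hJleast K hK.1 hK.2⟩ |>.symm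
end

section
/- Suppose the ideals of an ordered group G form a lattice satisfying the descending chain condition, and let I be a proper ideal of G that is not the proper intersection of two ideals, with I′ its minimum properly containing ideal. Let f : G → ℝ be a group homomorphism with f(I) = 0 and f(I′) ≠ 0. Then any ideal J with f(J) = 0 satisfies J ⊆ I. -/
/-- Suppose the ideals of an ordered abelian group form a lattice (sums of ideals
are ideals) satisfying the descending chain condition. Let `I` be a proper ideal
that is not the proper intersection of two ideals, with minimum properly
containing ideal `I′`. If `f : G → ℝ` is a group homomorphism vanishing on `I`
but not on `I′`, then any ideal `J` with `f(J) = 0` satisfies `J ⊆ I`. -/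
theorem stmt11 {G : Type*} [AddCommGroup G] [PartialOrder G]
    (hadd : ∀ g h x : G, g ≤ h → g + x ≤ h + x)
    (hdir : ∀ g h : G, ∃ y : G, g ≤ y ∧ h ≤ y)
    (hsup : ∀ J K : AddSubgroup G, IsOrderIdeal J → IsOrderIdeal K →
      IsOrderIdeal (J ⊔ K))
    (hDCC : ∀ f : ℕ → AddSubgroup G, (∀ i, IsOrderIdeal (f i)) →
      (∀ i, f (i + 1) ≤ f i) → ∃ N, ∀ m, N ≤ m → f m = f N)
    (I : AddSubgroup G) (hI : IsOrderIdeal I) (hproper : I ≠ ⊤)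
    (hnotint : ∀ J₁ J₂ : AddSubgroup G, IsOrderIdeal J₁ → IsOrderIdeal J₂ →
      I = J₁ ⊓ J₂ → J₁ = I ∨ J₂ = I)
    (I' : AddSubgroup G) (hI' : IsOrderIdeal I') (hII' : I < I')
    (hmin : ∀ J : AddSubgroup G, IsOrderIdeal J → I < J → I' ≤ J)
    (f : G →+ ℝ) (hfI : ∀ x ∈ I, f x = 0) (hfI' : ∃ x ∈ I', f x ≠ 0) :
    ∀ J : AddSubgroup G, IsOrderIdeal J → (∀ x ∈ J, f x = 0) → J ≤ I := by
  intro J hJ hfJ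
  by_contra h
  obtain ⟨x, hxJ, hxI⟩ := SetLike.not_le_iff_exists.mp h
  have hlt : I < I ⊔ J :=
    lt_of_le_of_ne le_sup_left (fun he => hxI (he ▸ (le_sup_right (a := I) : J ≤ I ⊔ J) hxJ))
  have hle : I' ≤ I ⊔ J := hmin _ (hsup I J hI hJ) hlt
  obtain ⟨y, hyI', hfy⟩ := hfI'
  obtain ⟨a, haI, b, hbJ, hab⟩ := AddSubgroup.mem_sup.mp (hle hyI')
  apply hfy
  rw [← hab, map_add, hfI a haI, hfJ b hbJ, add_zero]
end

section
/- Let G be a dimension group with order unit and I a cyclic ideal of G (i.e., I ≅ (ℤ, ℕ) as an ordered group, generated as a group by a positive element h). If the unique state on I extends to a positive group homomorphism on G, then there exists an ideal J of G with G = I ⊕ J as ordered groups (every g ∈ G decomposes uniquely as g = a + b with a ∈ I, b ∈ J, and g ≥ 0 iff a ≥ 0 and b ≥ 0). -/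
/-- Let `G` be a dimension group with order unit and `I` a cyclic ideal,
generated as a group by a positive element `h` with `0 ≤ k • h ↔ 0 ≤ k`
(so `I ≅ (ℤ, ℕ)` as an ordered group). If the unique state on `I` extends to a
positive group homomorphism on `G`, then `I` is a direct summand of `G` as an
ordered group: there is an ideal `J` such that every `g ∈ G` decomposes
uniquely as `g = a + b` with `a ∈ I`, `b ∈ J`, and `g ≥ 0` iff `a ≥ 0 ∧ b ≥ 0`. -/
theorem stmt13 {G : Type*} [AddCommGroup G] [PartialOrder G]
    (hadd : ∀ g h x : G, g ≤ h → g + x ≤ h + x)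
    (hdir : ∀ g h : G, ∃ y : G, g ≤ y ∧ h ≤ y)
    (hunperf : ∀ (n : ℕ) (g : G), 0 < n → 0 ≤ n • g → 0 ≤ g)
    (hRiesz : ∀ a₁ a₂ b₁ b₂ : G, a₁ ≤ b₁ → a₁ ≤ b₂ → a₂ ≤ b₁ → a₂ ≤ b₂ →
      ∃ z : G, a₁ ≤ z ∧ a₂ ≤ z ∧ z ≤ b₁ ∧ z ≤ b₂)
    (u : G) (hu : 0 ≤ u ∧ ∀ g : G, ∃ n : ℕ, -(n • u) ≤ g ∧ g ≤ n • u)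
    (I : AddSubgroup G) (hI : IsOrderIdeal I)
    (h : G) (hhI : h ∈ I)
    (hcyc : ∀ x ∈ I, ∃ k : ℤ, x = k • h)
    (hord : ∀ k : ℤ, (0 : G) ≤ k • h ↔ 0 ≤ k)
    (hext : ∃ f : G →+ ℝ, (∀ g : G, 0 ≤ g → 0 ≤ f g) ∧ f h = 1) :
    ∃ J : AddSubgroup G, IsOrderIdeal J ∧
      (∀ g : G, ∃! p : I × J, g = (p.1 : G) + (p.2 : G)) ∧
      (∀ a b : G, a ∈ I → b ∈ J → (0 ≤ a + b ↔ 0 ≤ a ∧ 0 ≤ b)) := by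
  classical
  obtain ⟨f, hfpos, hfh⟩ := hext
  obtain ⟨hconvI, -⟩ := hI
  -- basic order arithmetic
  have key : ∀ a b : G, a ≤ b ↔ 0 ≤ b - a := by
    intro a b
    constructor
    · intro hab
      simpa [sub_eq_add_neg] using hadd a b (-a) hab
    · intro h0
      simpa using hadd 0 (b - a) a h0
  have addnn : ∀ a b : G, 0 ≤ a → 0 ≤ b → 0 ≤ a + b := by
    intro a b ha hb
    exact le_trans hb (by simpa using hadd 0 a b ha)
  have hone : ((1 : ℤ) • h : G) = h := one_zsmul h
  have hpos : (0 : G) ≤ h := by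
    have := (hord 1).2 (by norm_num)
    rwa [hone] at this
  -- Riesz decomposition
  have rdec : ∀ q x y : G, 0 ≤ q → 0 ≤ x → 0 ≤ y → q ≤ x + y →
      ∃ q₁ q₂ : G, 0 ≤ q₁ ∧ q₁ ≤ x ∧ 0 ≤ q₂ ∧ q₂ ≤ y ∧ q = q₁ + q₂ := by
    intro q x y hq hx hy hqxy
    have h1 : q - y ≤ q := (key _ _).2 (by simpa using hy)
    have h2 : q - y ≤ x := by
      rw [key]
      have h3 := (key q (x + y)).1 hqxy
      have e : x - (q - y) = x + y - q := by abel
      rw [e]; exact h3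
    obtain ⟨z, hz0, hz1, hz2, hz3⟩ := hRiesz 0 (q - y) q x hq hx h1 h2
    refine ⟨z, q - z, hz0, hz3, (key z q).1 hz2, ?_, by abel⟩
    rw [key]
    have h4 := (key (q - y) z).1 hz1
    have e : y - (q - z) = z - (q - y) := by abel
    rw [e]; exact h4
  -- positive elements of I below h-free elements vanish
  have PI0 : ∀ x : G, x ∈ I → 0 ≤ x → ¬ h ≤ x → x = 0 := by
    intro x hxI hx0 hxh
    obtain ⟨k, rfl⟩ := hcyc x hxI
    have hk0 : 0 ≤ k := (hord k).1 hx0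
    rcases eq_or_lt_of_le hk0 with hk | hk
    · rw [← hk, zero_zsmul]
    · exfalso
      apply hxh
      rw [key]
      have h5 : (0 : G) ≤ (k - 1) • h := (hord _).2 (by omega)
      rwa [sub_zsmul, hone, ← sub_eq_add_neg] at h5
  -- P is closed under addition
  have Padd : ∀ a b : G, 0 ≤ a → ¬ h ≤ a → 0 ≤ b → ¬ h ≤ b → ¬ h ≤ a + b := by
    intro a b ha0 hah hb0 hbh hle
    obtain ⟨q₁, q₂, h1, h2, h3, h4, h5⟩ := rdec h a b hpos ha0 hb0 hle
    have hsub : h - q₁ = q₂ := by rw [h5]; abel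
    have hq1I : q₁ ∈ I := hconvI 0 h q₁ I.zero_mem hhI h1 (by
      rw [key, hsub]; exact h3)
    obtain ⟨k, hk⟩ := hcyc q₁ hq1I
    have hk0 : 0 ≤ k := (hord k).1 (hk ▸ h1)
    have hk1 : k ≤ 1 := by
      have h6 : (0 : G) ≤ (1 - k) • h := by
        rw [sub_zsmul, hone, ← hk, ← sub_eq_add_neg, hsub]; exact h3
      have := (hord _).1 h6
      omega
    interval_cases k
    · apply hbh
      have hq10 : q₁ = 0 := by rw [hk, zero_zsmul]
      rw [hq10, zero_add] at h5
      rw [h5]; exact h4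
    · apply hah
      have hq1h : q₁ = h := by rw [hk, hone]
      rw [← hq1h]; exact h2
  have hW0 : (0 : G) ≤ (0 : G) ∧ ¬ h ≤ (0 : G) := by
    refine ⟨le_refl 0, fun hc => ?_⟩
    have h7 : (0 : G) ≤ (-1 : ℤ) • h := by
      rw [neg_one_zsmul]
      simpa using (key h 0).1 hc
    have := (hord (-1)).1 h7
    omega
  -- greatest multiple of h below a positive element
  have posdec : ∀ g : G, 0 ≤ g → ∃ k : ℤ, 0 ≤ g - k • h ∧ ¬ h ≤ g - k • h := by
    intro g hg
    have hbdd : ∀ z : ℤ, z • h ≤ g → z ≤ ⌈f g⌉ := by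
      intro z hz
      have h8 : (0 : ℝ) ≤ f (g - z • h) := hfpos _ ((key _ _).1 hz)
      rw [map_sub, map_zsmul, hfh, zsmul_eq_mul, mul_one] at h8
      have h9 : (z : ℝ) ≤ f g := sub_nonneg.1 h8
      exact_mod_cast le_trans h9 (Int.le_ceil _)
    obtain ⟨k, hk, hmax⟩ := Int.exists_greatest_of_bdd
      (P := fun k : ℤ => k • h ≤ g) ⟨⌈f g⌉, hbdd⟩ ⟨0, by simpa using hg⟩
    refine ⟨k, (key _ _).1 hk, ?_⟩
    intro hc
    have h7 : (k + 1) • h ≤ g := by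
      rw [key]
      have e : g - (k + 1) • h = g - k • h - h := by
        rw [add_zsmul, hone]; abel
      rw [e, ← key]; exact hc
    have := hmax (k + 1) h7
    omega
  -- the complementing ideal
  let J : AddSubgroup G :=
  { carrier := {x | ∃ a b : G, (0 ≤ a ∧ ¬ h ≤ a) ∧ (0 ≤ b ∧ ¬ h ≤ b) ∧ x = a - b}
    zero_mem' := ⟨0, 0, hW0, hW0, by simp⟩
    add_mem' := by
      rintro x y ⟨a, b, ha, hb, rfl⟩ ⟨a', b', ha', hb', rfl⟩
      exact ⟨a + a', b + b', ⟨addnn _ _ ha.1 ha'.1, Padd _ _ ha.1 ha.2 ha'.1 ha'.2⟩,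
        ⟨addnn _ _ hb.1 hb'.1, Padd _ _ hb.1 hb.2 hb'.1 hb'.2⟩, by abel⟩
    neg_mem' := by
      rintro x ⟨a, b, ha, hb, rfl⟩
      exact ⟨b, a, hb, ha, by abel⟩ }
  have memJ : ∀ x : G, x ∈ J ↔
      ∃ a b : G, (0 ≤ a ∧ ¬ h ≤ a) ∧ (0 ≤ b ∧ ¬ h ≤ b) ∧ x = a - b := fun x => Iff.rfl
  -- every element decomposes
  have decomp : ∀ g : G, ∃ k : ℤ, g - k • h ∈ J := by
    intro g
    obtain ⟨y, hy1, hy2⟩ := hdir g 0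
    obtain ⟨k₁, hk₁⟩ := posdec y hy2
    obtain ⟨k₂, hk₂⟩ := posdec (y - g) ((key g y).1 hy1)
    refine ⟨k₁ - k₂, (memJ _).2 ⟨y - k₁ • h, (y - g) - k₂ • h, hk₁, hk₂, ?_⟩⟩
    rw [sub_zsmul]; abel
  -- I ∩ J = 0
  have IJ0 : ∀ x : G, x ∈ I → x ∈ J → x = 0 := by
    intro x hxI hxJ
    obtain ⟨a, b, ha, hb, hx⟩ := (memJ x).1 hxJ
    obtain ⟨k, hk⟩ := hcyc x hxI
    rcases le_or_gt 0 k with hk0 | hk0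
    · have h1 : k • h ≤ a := by
        rw [key]
        have e : a - k • h = b := by rw [← hk, hx]; abel
        rw [e]; exact hb.1
      have h2 : k • h = 0 := PI0 _ (AddSubgroup.zsmul_mem I hhI k) ((hord k).2 hk0)
        (fun hc => ha.2 (le_trans hc h1))
      rw [hk, h2]
    · exfalso
      have h1 : (-k) • h ≤ b := by
        rw [key]
        have e : b - (-k) • h = a := by rw [neg_zsmul, ← hk, hx]; abel
        rw [e]; exact ha.1
      have h2 : (-k) • h = 0 := PI0 _ (AddSubgroup.zsmul_mem I hhI (-k))
        ((hord _).2 (by omega)) (fun hc => hb.2 (le_trans hc h1))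
      have := (hord k).1 (by rw [show k • h = -((-k) • h) by rw [neg_zsmul, neg_neg], h2, neg_zero])
      omega
  refine ⟨J, ⟨?_, ?_⟩, ?_, ?_⟩
  · -- convexity of J
    intro g1 g2 x hg1 hg2 h1 h2
    obtain ⟨a, b, hpa, hpb, rfl⟩ := (memJ g1).1 hg1
    obtain ⟨a', b', hpa', hpb', rfl⟩ := (memJ g2).1 hg2
    refine (memJ x).2 ⟨x + b, b, ⟨?_, ?_⟩, hpb, by abel⟩
    · refine le_trans hpa.1 ((key _ _).2 ?_)
      have e : x + b - a = x - (a - b) := by abel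
      rw [e]; exact (key _ _).1 h1
    · intro hc
      have h3 : a' - b' ≤ a' := (key _ _).2 (by simpa using hpb'.1)
      have h4 : x + b ≤ a' + b := hadd x a' b (le_trans h2 h3)
      exact Padd a' b hpa'.1 hpa'.2 hpb.1 hpb.2 (le_trans hc h4)
  · -- directedness of J
    intro x hx
    obtain ⟨a, b, hpa, hpb, rfl⟩ := (memJ x).1 hx
    exact ⟨a, (memJ a).2 ⟨a, 0, hpa, hW0, by simp⟩, b, (memJ b).2 ⟨b, 0, hpb, hW0, by simp⟩,
      hpa.1, hpb.1, rfl⟩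
  · -- unique decomposition
    intro g
    obtain ⟨k, hkJ⟩ := decomp g
    refine ⟨(⟨k • h, AddSubgroup.zsmul_mem I hhI k⟩, ⟨g - k • h, hkJ⟩), by simp, ?_⟩
    rintro ⟨⟨a, haI⟩, ⟨b, hbJ⟩⟩ hq
    simp only [Prod.mk.injEq, Subtype.mk.injEq] at hq ⊢
    have hmem : a - k • h ∈ I := AddSubgroup.sub_mem I haI (AddSubgroup.zsmul_mem I hhI k)
    have hmem' : a - k • h ∈ J := by
      have e : a - k • h = (g - k • h) - b := by rw [hq]; abel
      rw [e]; exact AddSubgroup.sub_mem J hkJ hbJ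
    have h0 : a - k • h = 0 := IJ0 _ hmem hmem'
    have ha' : a = k • h := by
      have := sub_eq_zero.1 h0; exact this
    constructor
    · exact ha'
    · rw [hq, ha']; abel
  · -- the order is the direct sum order
    intro a b haI hbJ
    constructor
    · intro hab
      obtain ⟨k, hk⟩ := hcyc a haI
      obtain ⟨p, q, hp, hq, hb⟩ := (memJ b).1 hbJ
      have hk0 : 0 ≤ k := by
        by_contra hneg
        push_neg at hneg
        apply hp.2
        have h1 : (-k) • h + q ≤ p := by
          rw [key]
          have e : p - ((-k) • h + q) = a + b := by
            rw [hk, hb, neg_zsmul]; abel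
          rw [e]; exact hab
        have h2 : h ≤ (-k) • h := by
          rw [key]
          have := (hord (-k - 1)).2 (by omega)
          rwa [sub_zsmul, hone, ← sub_eq_add_neg] at this
        have h3 : (-k) • h ≤ (-k) • h + q := by
          have := hadd 0 q ((-k) • h) hq.1
          simpa [add_comm] using this
        exact le_trans h2 (le_trans h3 h1)
      have ha0 : 0 ≤ a := by rw [hk]; exact (hord k).2 hk0
      refine ⟨ha0, ?_⟩
      have h2 : q ≤ k • h + p := by
        rw [key]
        have e : k • h + p - q = a + b := by rw [hk, hb]; abel
        rw [e]; exact hab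
      obtain ⟨q₁, q₂, hq₁0, hq₁le, hq₂0, hq₂le, hqeq⟩ :=
        rdec q (k • h) p hq.1 ((hord k).2 hk0) hp.1 h2
      have hq₁I : q₁ ∈ I := hconvI 0 (k • h) q₁ I.zero_mem
        (AddSubgroup.zsmul_mem I hhI k) hq₁0 hq₁le
      have hq₁P : ¬ h ≤ q₁ := by
        intro hc
        apply hq.2
        refine le_trans hc ((key _ _).2 ?_)
        have e : q - q₁ = q₂ := by rw [hqeq]; abel
        rw [e]; exact hq₂0
      have hq₁z : q₁ = 0 := PI0 q₁ hq₁I hq₁0 hq₁P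
      have hqp : q ≤ p := by rw [hqeq, hq₁z, zero_add]; exact hq₂le
      rw [hb]; exact (key q p).1 hqp
    · rintro ⟨ha, hb⟩
      exact addnn _ _ ha hb
end

section
/- Let V = ℝⁿ with positive cone V⁺ = ⋃_{S ∈ S} {x ∈ ℝⁿ : xᵢ > 0 ∀ i ∈ P_S, xᵢ = 0 ∀ i ∉ S}, where S is a sublattice of 2^{1,…,n} containing ∅ and {1,…,n} and P_S ⊆ S. Suppose (i) setting P_S^≥ = P_S ∪ S^c, P^≥_{S₁∪S₂} = P^≥_{S₁} ∩ P^≥_{S₂} for all S₁, S₂ ∈ S, and (ii) S₁ ⊊ S₂ in S implies P_{S₂} ⊄ S₁. Then (V, V⁺) has Riesz interpolation. -/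
/-- The positive cone on `V = ℝⁿ` associated to a sublattice `𝒮` of `2^{1,…,n}`
and sets `P_S ⊆ S`. -/
def vectorPos (n : ℕ) (𝒮 : Set (Set (Fin n))) (P : Set (Fin n) → Set (Fin n)) :
    Set (Fin n → ℝ) :=
  {x | ∃ S ∈ 𝒮, (∀ i ∈ P S, 0 < x i) ∧ ∀ i ∉ S, x i = 0}

/-- Sufficiency of conditions (i) and (ii) for Riesz interpolation of
`(ℝⁿ, V⁺)`: if `P^≥_{S₁∪S₂} = P^≥_{S₁} ∩ P^≥_{S₂}` for all `S₁, S₂ ∈ 𝒮`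
(where `P^≥_S = P_S ∪ Sᶜ`), and `S₁ ⊊ S₂` implies `P_{S₂} ⊄ S₁`, then
`(ℝⁿ, V⁺)` has Riesz interpolation. -/
theorem stmt18 (n : ℕ) (𝒮 : Set (Set (Fin n)))
    (hlat : ∀ S₁ ∈ 𝒮, ∀ S₂ ∈ 𝒮, S₁ ∪ S₂ ∈ 𝒮 ∧ S₁ ∩ S₂ ∈ 𝒮)
    (hbot : ∅ ∈ 𝒮) (htop : Set.univ ∈ 𝒮)
    (P : Set (Fin n) → Set (Fin n)) (hP : ∀ S ∈ 𝒮, P S ⊆ S)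
    (hi : ∀ S₁ ∈ 𝒮, ∀ S₂ ∈ 𝒮,
      P (S₁ ∪ S₂) ∪ (S₁ ∪ S₂)ᶜ = (P S₁ ∪ S₁ᶜ) ∩ (P S₂ ∪ S₂ᶜ))
    (hii : ∀ S₁ ∈ 𝒮, ∀ S₂ ∈ 𝒮, S₁ ⊂ S₂ → ¬ P S₂ ⊆ S₁) :
    ∀ a₁ a₂ b₁ b₂ : Fin n → ℝ,
      b₁ - a₁ ∈ vectorPos n 𝒮 P → b₂ - a₁ ∈ vectorPos n 𝒮 P →
      b₁ - a₂ ∈ vectorPos n 𝒮 P → b₂ - a₂ ∈ vectorPos n 𝒮 P →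
      ∃ z : Fin n → ℝ, z - a₁ ∈ vectorPos n 𝒮 P ∧ z - a₂ ∈ vectorPos n 𝒮 P ∧
        b₁ - z ∈ vectorPos n 𝒮 P ∧ b₂ - z ∈ vectorPos n 𝒮 P := by
  intro a₁ a₂ b₁ b₂ h11 h12 h21 h22
  classical
  obtain ⟨T01, hT01S, hpos01, hzero01⟩ := h11
  obtain ⟨T11, hT11S, hpos11, hzero11⟩ := h12
  obtain ⟨T00, hT00S, hpos00, hzero00⟩ := h21
  obtain ⟨T10, hT10S, hpos10, hzero10⟩ := h22
  have q01 : ∀ i, i ∈ P T01 → 0 < b₁ i - a₁ i := fun i h => by simpa using hpos01 i h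
  have z01 : ∀ i, i ∉ T01 → b₁ i - a₁ i = 0 := fun i h => by simpa using hzero01 i h
  have q11 : ∀ i, i ∈ P T11 → 0 < b₂ i - a₁ i := fun i h => by simpa using hpos11 i h
  have z11 : ∀ i, i ∉ T11 → b₂ i - a₁ i = 0 := fun i h => by simpa using hzero11 i h
  have q00 : ∀ i, i ∈ P T00 → 0 < b₁ i - a₂ i := fun i h => by simpa using hpos00 i h
  have z00 : ∀ i, i ∉ T00 → b₁ i - a₂ i = 0 := fun i h => by simpa using hzero00 i h
  have q10 : ∀ i, i ∈ P T10 → 0 < b₂ i - a₂ i := fun i h => by simpa using hpos10 i h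
  have z10 : ∀ i, i ∉ T10 → b₂ i - a₂ i = 0 := fun i h => by simpa using hzero10 i h
  -- transfer of P-membership down from a union
  have hdown : ∀ S₁ ∈ 𝒮, ∀ S₂ ∈ 𝒮, ∀ k : Fin n, k ∈ P (S₁ ∪ S₂) →
      (k ∈ P S₁ ∨ k ∉ S₁) ∧ (k ∈ P S₂ ∨ k ∉ S₂) := by
    intro S₁ h₁ S₂ h₂ k hk
    have h := hi S₁ h₁ S₂ h₂
    have hk' : k ∈ (P S₁ ∪ S₁ᶜ) ∩ (P S₂ ∪ S₂ᶜ) := by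
      rw [← h]; exact Or.inl hk
    obtain ⟨hk1, hk2⟩ := hk'
    constructor
    · rcases hk1 with h' | h'
      · exact Or.inl h'
      · exact Or.inr h'
    · rcases hk2 with h' | h'
      · exact Or.inl h'
      · exact Or.inr h'
  -- transfer of P-membership up to a union
  have hup : ∀ S₁ ∈ 𝒮, ∀ S₂ ∈ 𝒮, ∀ k : Fin n, (k ∈ P S₁ ∨ k ∉ S₁) →
      (k ∈ P S₂ ∨ k ∉ S₂) → k ∈ S₁ ∪ S₂ → k ∈ P (S₁ ∪ S₂) := by
    intro S₁ h₁ S₂ h₂ k hk1 hk2 hk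
    have h := hi S₁ h₁ S₂ h₂
    have hk' : k ∈ (P S₁ ∪ S₁ᶜ) ∩ (P S₂ ∪ S₂ᶜ) := by
      constructor
      · rcases hk1 with h' | h'
        · exact Or.inl h'
        · exact Or.inr h'
      · rcases hk2 with h' | h'
        · exact Or.inl h'
        · exact Or.inr h'
    rw [← h] at hk'
    rcases hk' with h' | h'
    · exact h'
    · exact absurd hk h'
  have hUmem : T00 ∪ T11 ∈ 𝒮 := (hlat _ hT00S _ hT11S).1
  have hUmem' : T01 ∪ T10 ∈ 𝒮 := (hlat _ hT01S _ hT10S).1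
  -- positivity / vanishing of the common sum on both unions
  have p1 : ∀ i ∈ P (T00 ∪ T11), 0 < b₁ i + b₂ i - a₁ i - a₂ i := by
    intro i hiP
    obtain ⟨d1, d2⟩ := hdown T00 hT00S T11 hT11S i hiP
    have hiU : i ∈ T00 ∪ T11 := hP _ hUmem hiP
    rcases hiU with h | h
    · have h1 : 0 < b₁ i - a₂ i := by
        rcases d1 with h' | h'
        · exact q00 i h'
        · exact absurd h h'
      have h2 : 0 ≤ b₂ i - a₁ i := by
        rcases d2 with h' | h'
        · exact (q11 i h').le
        · exact le_of_eq (z11 i h').symm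
      linarith
    · have h1 : 0 < b₂ i - a₁ i := by
        rcases d2 with h' | h'
        · exact q11 i h'
        · exact absurd h h'
      have h2 : 0 ≤ b₁ i - a₂ i := by
        rcases d1 with h' | h'
        · exact (q00 i h').le
        · exact le_of_eq (z00 i h').symm
      linarith
  have n1 : ∀ i, i ∉ T00 ∪ T11 → b₁ i + b₂ i - a₁ i - a₂ i = 0 := by
    intro i h
    have e1 := z00 i (fun h' => h (Or.inl h'))
    have e2 := z11 i (fun h' => h (Or.inr h'))
    linarith
  have p2 : ∀ i ∈ P (T01 ∪ T10), 0 < b₁ i + b₂ i - a₁ i - a₂ i := by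
    intro i hiP
    obtain ⟨d1, d2⟩ := hdown T01 hT01S T10 hT10S i hiP
    have hiU : i ∈ T01 ∪ T10 := hP _ hUmem' hiP
    rcases hiU with h | h
    · have h1 : 0 < b₁ i - a₁ i := by
        rcases d1 with h' | h'
        · exact q01 i h'
        · exact absurd h h'
      have h2 : 0 ≤ b₂ i - a₂ i := by
        rcases d2 with h' | h'
        · exact (q10 i h').le
        · exact le_of_eq (z10 i h').symm
      linarith
    · have h1 : 0 < b₂ i - a₂ i := by
        rcases d2 with h' | h'
        · exact q10 i h'
        · exact absurd h h'
      have h2 : 0 ≤ b₁ i - a₁ i := by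
        rcases d1 with h' | h'
        · exact (q01 i h').le
        · exact le_of_eq (z01 i h').symm
      linarith
  have n2 : ∀ i, i ∉ T01 ∪ T10 → b₁ i + b₂ i - a₁ i - a₂ i = 0 := by
    intro i h
    have e1 := z01 i (fun h' => h (Or.inl h'))
    have e2 := z10 i (fun h' => h (Or.inr h'))
    linarith
  -- uniqueness of witnesses: key identity
  have hBigMem : (T00 ∪ T11) ∪ (T01 ∪ T10) ∈ 𝒮 := (hlat _ hUmem _ hUmem').1
  have hkey : T00 ∪ T11 = T01 ∪ T10 := by
    have e1 : T00 ∪ T11 = (T00 ∪ T11) ∪ (T01 ∪ T10) := by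
      by_contra hne
      have hss : (T00 ∪ T11) ⊂ (T00 ∪ T11) ∪ (T01 ∪ T10) :=
        ssubset_iff_subset_ne.mpr ⟨Set.subset_union_left, hne⟩
      have hnot := hii _ hUmem _ hBigMem hss
      obtain ⟨j, hj1, hj2⟩ := Set.not_subset.mp hnot
      obtain ⟨d1, d2⟩ := hdown _ hUmem _ hUmem' j hj1
      have hjU : j ∈ (T00 ∪ T11) ∪ (T01 ∪ T10) := hP _ hBigMem hj1
      have hy0 : b₁ j + b₂ j - a₁ j - a₂ j = 0 := n1 j hj2
      have hy1 : 0 < b₁ j + b₂ j - a₁ j - a₂ j := by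
        rcases d2 with h | h
        · exact p2 j h
        · rcases hjU with h' | h'
          · exact absurd h' hj2
          · exact absurd h' h
      linarith
    have e2 : T01 ∪ T10 = (T00 ∪ T11) ∪ (T01 ∪ T10) := by
      by_contra hne
      have hss : (T01 ∪ T10) ⊂ (T00 ∪ T11) ∪ (T01 ∪ T10) :=
        ssubset_iff_subset_ne.mpr ⟨Set.subset_union_right, hne⟩
      have hnot := hii _ hUmem' _ hBigMem hss
      obtain ⟨j, hj1, hj2⟩ := Set.not_subset.mp hnot
      obtain ⟨d1, d2⟩ := hdown _ hUmem _ hUmem' j hj1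
      have hjU : j ∈ (T00 ∪ T11) ∪ (T01 ∪ T10) := hP _ hBigMem hj1
      have hy0 : b₁ j + b₂ j - a₁ j - a₂ j = 0 := n2 j hj2
      have hy1 : 0 < b₁ j + b₂ j - a₁ j - a₂ j := by
        rcases d1 with h | h
        · exact p1 j h
        · rcases hjU with h' | h'
          · exact absurd h' h
          · exact absurd h' hj2
      linarith
    rw [e1]
    exact e2.symm
  -- the four witness sets for the interpolant
  set A := T00 ∩ T10 with hA_def
  set B := T01 ∩ T11 with hB_def
  set E := T00 ∩ T01 with hE_def
  set F := T10 ∩ T11 with hF_def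
  have hAS : A ∈ 𝒮 := (hlat _ hT00S _ hT10S).2
  have hBS : B ∈ 𝒮 := (hlat _ hT01S _ hT11S).2
  have hES : E ∈ 𝒮 := (hlat _ hT00S _ hT01S).2
  have hFS : F ∈ 𝒮 := (hlat _ hT10S _ hT11S).2
  have subT00 : ∀ i, i ∈ T00 → i ∈ T01 ∨ i ∈ T10 := by
    intro i h
    have h' : i ∈ T00 ∪ T11 := Or.inl h
    rw [hkey] at h'
    exact h'
  have subT11 : ∀ i, i ∈ T11 → i ∈ T01 ∨ i ∈ T10 := by
    intro i h
    have h' : i ∈ T00 ∪ T11 := Or.inr h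
    rw [hkey] at h'
    exact h'
  have subT01 : ∀ i, i ∈ T01 → i ∈ T00 ∨ i ∈ T11 := by
    intro i h
    have h' : i ∈ T01 ∪ T10 := Or.inl h
    rw [← hkey] at h'
    exact h'
  have subT10 : ∀ i, i ∈ T10 → i ∈ T00 ∨ i ∈ T11 := by
    intro i h
    have h' : i ∈ T01 ∪ T10 := Or.inr h
    rw [← hkey] at h'
    exact h'
  have hAE : A ∪ E = T00 := by
    rw [hA_def, hE_def]
    ext j
    simp only [Set.mem_union, Set.mem_inter_iff]
    constructor
    · rintro (⟨h, _⟩ | ⟨h, _⟩) <;> exact h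
    · intro h
      rcases subT00 j h with h' | h'
      · exact Or.inr ⟨h, h'⟩
      · exact Or.inl ⟨h, h'⟩
  have hBE : B ∪ E = T01 := by
    rw [hB_def, hE_def]
    ext j
    simp only [Set.mem_union, Set.mem_inter_iff]
    constructor
    · rintro (⟨h, _⟩ | ⟨_, h⟩) <;> exact h
    · intro h
      rcases subT01 j h with h' | h'
      · exact Or.inr ⟨h', h⟩
      · exact Or.inl ⟨h, h'⟩
  have hAF : A ∪ F = T10 := by
    rw [hA_def, hF_def]
    ext j
    simp only [Set.mem_union, Set.mem_inter_iff]
    constructor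
    · rintro (⟨_, h⟩ | ⟨h, _⟩) <;> exact h
    · intro h
      rcases subT10 j h with h' | h'
      · exact Or.inl ⟨h', h⟩
      · exact Or.inr ⟨h, h'⟩
  have hBF : B ∪ F = T11 := by
    rw [hB_def, hF_def]
    ext j
    simp only [Set.mem_union, Set.mem_inter_iff]
    constructor
    · rintro (⟨_, h⟩ | ⟨_, h⟩) <;> exact h
    · intro h
      rcases subT11 j h with h' | h'
      · exact Or.inl ⟨h', h⟩
      · exact Or.inr ⟨h', h⟩
  -- specialized up-transfers
  have upAE : ∀ i, i ∈ P A → (i ∈ P E ∨ i ∉ E) → i ∈ P T00 := by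
    intro i h1 h2
    have h := hup A hAS E hES i (Or.inl h1) h2 (Or.inl (hP A hAS h1))
    rwa [hAE] at h
  have upEA : ∀ i, i ∈ P E → (i ∈ P A ∨ i ∉ A) → i ∈ P T00 := by
    intro i h1 h2
    have h := hup A hAS E hES i h2 (Or.inl h1) (Or.inr (hP E hES h1))
    rwa [hAE] at h
  have upBE : ∀ i, i ∈ P B → (i ∈ P E ∨ i ∉ E) → i ∈ P T01 := by
    intro i h1 h2
    have h := hup B hBS E hES i (Or.inl h1) h2 (Or.inl (hP B hBS h1))
    rwa [hBE] at h
  have upEB : ∀ i, i ∈ P E → (i ∈ P B ∨ i ∉ B) → i ∈ P T01 := by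
    intro i h1 h2
    have h := hup B hBS E hES i h2 (Or.inl h1) (Or.inr (hP E hES h1))
    rwa [hBE] at h
  have upAF : ∀ i, i ∈ P A → (i ∈ P F ∨ i ∉ F) → i ∈ P T10 := by
    intro i h1 h2
    have h := hup A hAS F hFS i (Or.inl h1) h2 (Or.inl (hP A hAS h1))
    rwa [hAF] at h
  have upFA : ∀ i, i ∈ P F → (i ∈ P A ∨ i ∉ A) → i ∈ P T10 := by
    intro i h1 h2
    have h := hup A hAS F hFS i h2 (Or.inl h1) (Or.inr (hP F hFS h1))
    rwa [hAF] at h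
  have upBF : ∀ i, i ∈ P B → (i ∈ P F ∨ i ∉ F) → i ∈ P T11 := by
    intro i h1 h2
    have h := hup B hBS F hFS i (Or.inl h1) h2 (Or.inl (hP B hBS h1))
    rwa [hBF] at h
  have upFB : ∀ i, i ∈ P F → (i ∈ P B ∨ i ∉ B) → i ∈ P T11 := by
    intro i h1 h2
    have h := hup B hBS F hFS i h2 (Or.inl h1) (Or.inr (hP F hFS h1))
    rwa [hBF] at h
  -- the interpolant increment
  set p : Fin n → ℝ := fun i =>
    if i ∈ A then
      if i ∈ E then
        if i ∈ B then
          if i ∈ F then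
            (max (if i ∈ P A then (0:ℝ) else
                    (min (min 0 (a₁ i - a₂ i)) (min (b₁ i - a₂ i) (b₂ i - a₂ i)) - 1))
                 (if i ∈ P B then a₁ i - a₂ i else
                    (min (min 0 (a₁ i - a₂ i)) (min (b₁ i - a₂ i) (b₂ i - a₂ i)) - 1))
             + min (if i ∈ P E then b₁ i - a₂ i else
                      (max (max 0 (a₁ i - a₂ i)) (max (b₁ i - a₂ i) (b₂ i - a₂ i)) + 1))
                   (if i ∈ P F then b₂ i - a₂ i else
                      (max (max 0 (a₁ i - a₂ i)) (max (b₁ i - a₂ i) (b₂ i - a₂ i)) + 1))) / 2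
          else b₂ i - a₂ i
        else a₁ i - a₂ i
      else b₁ i - a₂ i
    else 0
    with hp_def
  have hK : ∀ i, (i ∉ A → p i = 0) ∧ (i ∈ P A → 0 < p i) ∧
      (i ∉ B → p i = a₁ i - a₂ i) ∧ (i ∈ P B → a₁ i - a₂ i < p i) ∧
      (i ∉ E → p i = b₁ i - a₂ i) ∧ (i ∈ P E → p i < b₁ i - a₂ i) ∧
      (i ∉ F → p i = b₂ i - a₂ i) ∧ (i ∈ P F → p i < b₂ i - a₂ i) := by
    intro i
    simp only [hp_def]
    by_cases hA : i ∈ A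
    · rw [if_pos hA]
      have hA' := hA
      rw [hA_def] at hA'
      obtain ⟨iT00, iT10⟩ := hA'
      by_cases hE : i ∈ E
      · rw [if_pos hE]
        have hE' := hE
        rw [hE_def] at hE'
        obtain ⟨-, iT01⟩ := hE'
        by_cases hB : i ∈ B
        · rw [if_pos hB]
          have hB' := hB
          rw [hB_def] at hB'
          obtain ⟨-, iT11⟩ := hB'
          by_cases hF : i ∈ F
          · rw [if_pos hF]
            -- the "free" case: strict interval
            set l1 : ℝ := (if i ∈ P A then (0:ℝ) else
                    (min (min 0 (a₁ i - a₂ i)) (min (b₁ i - a₂ i) (b₂ i - a₂ i)) - 1)) with hl1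
            set l2 : ℝ := (if i ∈ P B then a₁ i - a₂ i else
                    (min (min 0 (a₁ i - a₂ i)) (min (b₁ i - a₂ i) (b₂ i - a₂ i)) - 1)) with hl2
            set u1 : ℝ := (if i ∈ P E then b₁ i - a₂ i else
                      (max (max 0 (a₁ i - a₂ i)) (max (b₁ i - a₂ i) (b₂ i - a₂ i)) + 1)) with hu1
            set u2 : ℝ := (if i ∈ P F then b₂ i - a₂ i else
                      (max (max 0 (a₁ i - a₂ i)) (max (b₁ i - a₂ i) (b₂ i - a₂ i)) + 1)) with hu2
            have key5 : max l1 l2 < min u1 u2 := by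
              rw [hl1, hl2, hu1, hu2]
              have m1 : min (min 0 (a₁ i - a₂ i)) (min (b₁ i - a₂ i) (b₂ i - a₂ i))
                  ≤ min (b₁ i - a₂ i) (b₂ i - a₂ i) := min_le_right _ _
              have m2 : min (b₁ i - a₂ i) (b₂ i - a₂ i) ≤ b₁ i - a₂ i := min_le_left _ _
              have m3 : min (b₁ i - a₂ i) (b₂ i - a₂ i) ≤ b₂ i - a₂ i := min_le_right _ _
              have m4 : min (min 0 (a₁ i - a₂ i)) (min (b₁ i - a₂ i) (b₂ i - a₂ i))
                  ≤ min 0 (a₁ i - a₂ i) := min_le_left _ _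
              have m5 : min 0 (a₁ i - a₂ i) ≤ 0 := min_le_left _ _
              have M1 : max 0 (a₁ i - a₂ i)
                  ≤ max (max 0 (a₁ i - a₂ i)) (max (b₁ i - a₂ i) (b₂ i - a₂ i)) := le_max_left _ _
              have M2 : (0:ℝ) ≤ max 0 (a₁ i - a₂ i) := le_max_left _ _
              have M3 : a₁ i - a₂ i ≤ max 0 (a₁ i - a₂ i) := le_max_right _ _
              apply max_lt <;> apply lt_min
              · by_cases hPA : i ∈ P A
                · rw [if_pos hPA]
                  by_cases hPE : i ∈ P E
                  · rw [if_pos hPE]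
                    exact q00 i (upAE i hPA (Or.inl hPE))
                  · rw [if_neg hPE]; linarith
                · rw [if_neg hPA]
                  by_cases hPE : i ∈ P E
                  · rw [if_pos hPE]; linarith
                  · rw [if_neg hPE]; linarith
              · by_cases hPA : i ∈ P A
                · rw [if_pos hPA]
                  by_cases hPF : i ∈ P F
                  · rw [if_pos hPF]
                    exact q10 i (upAF i hPA (Or.inl hPF))
                  · rw [if_neg hPF]; linarith
                · rw [if_neg hPA]
                  by_cases hPF : i ∈ P F
                  · rw [if_pos hPF]; linarith
                  · rw [if_neg hPF]; linarith
              · by_cases hPB : i ∈ P B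
                · rw [if_pos hPB]
                  by_cases hPE : i ∈ P E
                  · rw [if_pos hPE]
                    have := q01 i (upBE i hPB (Or.inl hPE))
                    linarith
                  · rw [if_neg hPE]; linarith
                · rw [if_neg hPB]
                  by_cases hPE : i ∈ P E
                  · rw [if_pos hPE]; linarith
                  · rw [if_neg hPE]; linarith
              · by_cases hPB : i ∈ P B
                · rw [if_pos hPB]
                  by_cases hPF : i ∈ P F
                  · rw [if_pos hPF]
                    have := q11 i (upBF i hPB (Or.inl hPF))
                    linarith
                  · rw [if_neg hPF]; linarith
                · rw [if_neg hPB]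
                  by_cases hPF : i ∈ P F
                  · rw [if_pos hPF]; linarith
                  · rw [if_neg hPF]; linarith
            refine ⟨fun h => absurd hA h, ?_, fun h => absurd hB h, ?_,
              fun h => absurd hE h, ?_, fun h => absurd hF h, ?_⟩
            · intro hPA
              have hv : l1 = 0 := by rw [hl1, if_pos hPA]
              have h0 : (0:ℝ) ≤ max l1 l2 := le_trans (le_of_eq hv.symm) (le_max_left l1 l2)
              linarith
            · intro hPB
              have hv : l2 = a₁ i - a₂ i := by rw [hl2, if_pos hPB]
              have h0 : a₁ i - a₂ i ≤ max l1 l2 := le_trans (le_of_eq hv.symm) (le_max_right l1 l2)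
              linarith
            · intro hPE
              have hv : u1 = b₁ i - a₂ i := by rw [hu1, if_pos hPE]
              have h0 : min u1 u2 ≤ b₁ i - a₂ i := le_trans (min_le_left u1 u2) (le_of_eq hv)
              linarith
            · intro hPF
              have hv : u2 = b₂ i - a₂ i := by rw [hu2, if_pos hPF]
              have h0 : min u1 u2 ≤ b₂ i - a₂ i := le_trans (min_le_right u1 u2) (le_of_eq hv)
              linarith
          · exact absurd (by rw [hF_def]; exact ⟨iT10, iT11⟩) hF
        · rw [if_neg hB]
          have h11' : i ∉ T11 := fun h => hB (by rw [hB_def]; exact ⟨iT01, h⟩)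
          have e11 := z11 i h11'
          refine ⟨fun h => absurd hA h, ?_, fun _ => rfl, fun h => absurd (hP B hBS h) hB,
            fun h => absurd hE h, ?_, ?_, ?_⟩
          · intro hPA
            have hF' : i ∉ F := fun h => h11' (by rw [hF_def] at h; exact h.2)
            have := q10 i (upAF i hPA (Or.inr hF'))
            linarith
          · intro hPE
            have := q01 i (upEB i hPE (Or.inr hB))
            linarith
          · intro hF
            linarith
          · intro hPF
            have := hP F hFS hPF
            rw [hF_def] at this
            exact absurd this.2 h11'
      · rw [if_neg hE]
        have h01 : i ∉ T01 := fun h => hE (by rw [hE_def]; exact ⟨iT00, h⟩)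
        have e01 := z01 i h01
        refine ⟨fun h => absurd hA h, ?_, ?_, ?_, fun _ => rfl,
          fun h => absurd (hP E hES h) hE, ?_, ?_⟩
        · intro hPA
          exact q00 i (upAE i hPA (Or.inr hE))
        · intro hB
          linarith
        · intro hPB
          have := q01 i (upBE i hPB (Or.inr hE))
          linarith
        · intro hF
          have h11' : i ∉ T11 := fun h => hF (by rw [hF_def]; exact ⟨iT10, h⟩)
          have := z11 i h11'
          linarith
        · intro hPF
          have hB' : i ∉ B := fun h => h01 (by rw [hB_def] at h; exact h.1)
          have := q11 i (upFB i hPF (Or.inr hB'))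
          linarith
    · rw [if_neg hA]
      refine ⟨fun _ => rfl, fun h => absurd (hP A hAS h) hA, ?_, ?_, ?_, ?_, ?_, ?_⟩
      · intro hB
        by_cases h00 : i ∈ T00
        · have h10 : i ∉ T10 := fun h => hA (by rw [hA_def]; exact ⟨h00, h⟩)
          have h01 : i ∈ T01 := by
            rcases subT00 i h00 with h | h
            · exact h
            · exact absurd h h10
          have h11' : i ∉ T11 := fun h => hB (by rw [hB_def]; exact ⟨h01, h⟩)
          have e1 := z10 i h10
          have e2 := z11 i h11'
          linarith
        · have h01 : i ∉ T01 := by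
            intro h01
            rcases subT01 i h01 with h | h
            · exact h00 h
            · exact hB (by rw [hB_def]; exact ⟨h01, h⟩)
          have e1 := z00 i h00
          have e2 := z01 i h01
          linarith
      · intro hPB
        by_cases h00 : i ∈ T00
        · have h10 : i ∉ T10 := fun h => hA (by rw [hA_def]; exact ⟨h00, h⟩)
          have hFn : i ∉ F := fun h => h10 (by rw [hF_def] at h; exact h.1)
          have := q11 i (upBF i hPB (Or.inr hFn))
          have e2 := z10 i h10
          linarith
        · have hEn : i ∉ E := fun h => h00 (by rw [hE_def] at h; exact h.1)
          have := q01 i (upBE i hPB (Or.inr hEn))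
          have e2 := z00 i h00
          linarith
      · intro hE
        have h00 : i ∉ T00 := by
          rw [← hAE]
          rintro (h | h)
          · exact hA h
          · exact hE h
        have := z00 i h00
        linarith
      · intro hPE
        exact q00 i (upEA i hPE (Or.inr hA))
      · intro hF
        have h10 : i ∉ T10 := by
          rw [← hAF]
          rintro (h | h)
          · exact hA h
          · exact hF h
        have := z10 i h10
        linarith
      · intro hPF
        exact q10 i (upFA i hPF (Or.inr hA))
  refine ⟨fun i => a₂ i + p i, ⟨B, hBS, ?_, ?_⟩, ⟨A, hAS, ?_, ?_⟩,
    ⟨E, hES, ?_, ?_⟩, ⟨F, hFS, ?_, ?_⟩⟩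
  · intro i hiP
    have := (hK i).2.2.2.1 hiP
    simp only [Pi.sub_apply]
    linarith
  · intro i hin
    have := (hK i).2.2.1 hin
    simp only [Pi.sub_apply]
    linarith
  · intro i hiP
    have := (hK i).2.1 hiP
    simp only [Pi.sub_apply]
    linarith
  · intro i hin
    have := (hK i).1 hin
    simp only [Pi.sub_apply]
    linarith
  · intro i hiP
    have := (hK i).2.2.2.2.2.1 hiP
    simp only [Pi.sub_apply]
    linarith
  · intro i hin
    have := (hK i).2.2.2.2.1 hin
    simp only [Pi.sub_apply]
    linarith
  · intro i hiP
    have := (hK i).2.2.2.2.2.2.2 hiP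
    simp only [Pi.sub_apply]
    linarith
  · intro i hin
    have := (hK i).2.2.2.2.2.2.1 hin
    simp only [Pi.sub_apply]
    linarith
end
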